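/- arXiv:2002.09570 — 11 statements merged into one kernel-verified Lean document; each statement's English description precedes it below -/
import Mathlib

section
/- Let m, n ≥ 3 be integers with gcd(m,n) > 1. Then Bob (the second player) has a winning strategy in the feedback game on the toroidal grid graph Q(m,n) with starting vertex (0,0). -/
/-- `FeedbackWin st E u` : the player to move wins the feedback game with starting
vertex `st`, remaining (unused) edges `E`, and token currently on `u`.  The player
to move wins iff they can move the token along some remaining edge `{u, v}` (which
is then deleted) so that either `v` is the starting vertex `st`, or `v` is incident
with no remaining edge, or the resulting position is a loss for the opponent
(who is then the player to move).  This is a well-founded recursion on the finite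
set of remaining edges. -/
def FeedbackWin {V : Type*} [DecidableEq V] (st : V) (E : Finset (Sym2 V)) (u : V) : Prop :=
  ∃ v, ∃ _hmem : Sym2.mk u v ∈ E,
    v = st ∨ (∀ e ∈ E.erase (Sym2.mk u v), v ∉ e) ∨
      ¬ FeedbackWin st (E.erase (Sym2.mk u v)) v
termination_by E.card
decreasing_by exact Finset.card_erase_lt_of_mem _hmem

/-- Alice (the first player) has a winning strategy in the feedback game on the
finite graph `G` with starting vertex `st`. -/
def AliceWins {V : Type*} [Finite V] [DecidableEq V] (G : SimpleGraph V) (st : V) : Prop :=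
  FeedbackWin st G.edgeSet.toFinite.toFinset st

/-- Bob (the second player) has a winning strategy in the feedback game on the
finite graph `G` with starting vertex `st`.  The feedback game is a finite
two-player game without draws, so by Zermelo determinacy this is equivalent to
Alice not having a winning strategy. -/
def BobWins {V : Type*} [Finite V] [DecidableEq V] (G : SimpleGraph V) (st : V) : Prop :=
  ¬ AliceWins G st

/-- The toroidal grid graph `Q(m,n) = C_m □ C_n` on vertex set `ZMod m × ZMod n`:
`(a,b)` is adjacent to `(a',b')` iff either `a = a'` and `b' - b = ±1`, or `b = b'`
and `a' - a = ±1`. -/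
def TorGraph (m n : ℕ) : SimpleGraph (ZMod m × ZMod n) :=
  SimpleGraph.fromRel fun p q =>
    (p.1 = q.1 ∧ q.2 = p.2 + 1) ∨ (p.2 = q.2 ∧ q.1 = p.1 + 1)

/-!
Colour `(a, b)` by `a + b ∈ ZMod d` with `d = gcd(m, n) > 1`. Every edge changes the colour
by `±1 ≠ 0`, so the colour class `S` of the start is independent, and every vertex has an even
number of neighbours in `S`: its neighbours come in the equally coloured pairs
`x + (1,0), x + (0,1)` and `x - (1,0), x - (0,1)`.

Bob keeps the token in `S`. When Alice moves from `S` to `v ∉ S`, the vertex `v` is left with an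
odd, hence positive, number of unused edges to `S`; so she has neither reached the start nor
stranded the token, and Bob moves back into `S` along one of them. Afterwards every vertex
outside `S` again has an even number of unused edges to `S`.
-/

namespace FeedbackGame

variable {V : Type*} [DecidableEq V]

def linksTo (E : Finset (Sym2 V)) (S : Finset V) (x : V) : Finset V :=
  S.filter fun w => s(x, w) ∈ E

lemma linksTo_erase_self {E : Finset (Sym2 V)} {S : Finset V} {x y : V} :
    linksTo (E.erase s(x, y)) S x = (linksTo E S x).erase y := by
  ext w
  simp only [linksTo, Finset.mem_filter, Finset.mem_erase, ne_eq, Sym2.congr_right]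
  tauto

lemma linksTo_erase_of_ne {E : Finset (Sym2 V)} {S : Finset V} {x v y : V}
    (hxv : x ≠ v) (hxy : x ≠ y) : linksTo (E.erase s(v, y)) S x = linksTo E S x := by
  ext w
  simp only [linksTo, Finset.mem_filter, Finset.mem_erase, ne_eq, Sym2.eq_iff]
  tauto

theorem not_feedbackWin_of_even_linksTo {st u : V} {E : Finset (Sym2 V)} (S : Finset V)
    (hst : st ∈ S) (hu : u ∈ S) (hindep : ∀ v ∈ S, ∀ w ∈ S, s(v, w) ∉ E)
    (heven : ∀ x ∉ S, Even (linksTo E S x).card) : ¬ FeedbackWin st E u := by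
  induction E using Finset.strongInduction generalizing u with
  | _ E ih =>
  intro hwin
  rw [FeedbackWin] at hwin
  obtain ⟨v, huv, hv⟩ := hwin
  have hvS : v ∉ S := fun hvS => hindep u hu v hvS huv
  have hu_link : u ∈ linksTo E S v := Finset.mem_filter.mpr ⟨hu, Sym2.eq_swap ▸ huv⟩
  have hodd : Odd ((linksTo E S v).erase u).card := by
    rw [Finset.card_erase_of_mem hu_link]
    exact Nat.Even.sub_odd (Finset.card_pos.mpr ⟨u, hu_link⟩) (heven v hvS) odd_one
  obtain ⟨w, hw⟩ := Finset.card_pos.mp hodd.pos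
  rw [← linksTo_erase_self, Sym2.eq_swap] at hw
  obtain ⟨hwS, hvw⟩ := Finset.mem_filter.mp hw
  rcases hv with rfl | hstuck | hbob
  · exact hvS hst
  · exact hstuck _ hvw (Sym2.mem_mk_left v w)
  apply hbob
  rw [FeedbackWin]
  refine ⟨w, hvw, Or.inr (Or.inr (ih _ ?_ hwS ?_ ?_))⟩
  · exact (Finset.erase_subset _ _).trans_ssubset (Finset.erase_ssubset huv)
  · exact fun a ha b hb hab => hindep a ha b hb
      (Finset.mem_of_mem_erase (Finset.mem_of_mem_erase hab))
  intro x hx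
  by_cases hxv : x = v
  · subst hxv
    rw [linksTo_erase_self, Sym2.eq_swap, linksTo_erase_self,
      Finset.card_erase_of_mem (by rwa [← linksTo_erase_self, Sym2.eq_swap])]
    exact Nat.Odd.sub_odd hodd odd_one
  · have hxu : x ≠ u := fun h => hx (h ▸ hu)
    have hxw : x ≠ w := fun h => hx (h ▸ hwS)
    rw [linksTo_erase_of_ne hxv hxw, linksTo_erase_of_ne hxu hxv]
    exact heven x hx

open Classical in
theorem bobWins_of_even_card_adj [Finite V] (G : SimpleGraph V)
    {st : V} (S : Finset V) (hst : st ∈ S) (hindep : ∀ v ∈ S, ∀ w ∈ S, ¬ G.Adj v w)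
    (heven : ∀ x ∉ S, Even (S.filter (G.Adj x)).card) : BobWins G st := by
  have hmem : ∀ v w, s(v, w) ∈ G.edgeSet.toFinite.toFinset ↔ G.Adj v w := by simp
  refine not_feedbackWin_of_even_linksTo S hst hst
    (fun v hv w hw hvw => hindep v hv w hw ((hmem v w).mp hvw)) fun x hx => ?_
  convert heven x hx using 2
  ext w
  simp [linksTo, hmem]

end FeedbackGame

lemma Finset.even_card_filter_pair {α : Type*} [DecidableEq α] {p : α → Prop} [DecidablePred p]
    {a b : α} (hab : a ≠ b) (h : p a ↔ p b) : Even (({a, b} : Finset α).filter p).card := by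
  by_cases ha : p a
  · simp [Finset.filter_insert, Finset.filter_singleton, ha, h.mp ha, hab]
  · simp [Finset.filter_insert, Finset.filter_singleton, ha, mt h.mpr ha]

instance ZMod.nontrivial_of_two_lt {k : ℕ} [Fact (2 < k)] : Nontrivial (ZMod k) :=
  ZMod.nontrivial_iff.mpr (by have := Fact.out (p := 2 < k); omega)

namespace TorGraph

variable {m n : ℕ}

lemma adj_iff [Nontrivial (ZMod m)] [Nontrivial (ZMod n)] {p q : ZMod m × ZMod n} :
    (TorGraph m n).Adj p q ↔
      (q - p = (1, 0) ∨ q - p = (0, 1)) ∨ (p - q = (1, 0) ∨ p - q = (0, 1)) := by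
  have hrel : ∀ p q : ZMod m × ZMod n, ((p.1 = q.1 ∧ q.2 = p.2 + 1) ∨ (p.2 = q.2 ∧ q.1 = p.1 + 1))
      ↔ (q - p = (1, 0) ∨ q - p = (0, 1)) := by
    intro p q
    simp only [sub_eq_iff_eq_add', Prod.ext_iff, Prod.fst_add, Prod.snd_add, add_zero]
    grind
  rw [TorGraph, SimpleGraph.fromRel_adj, hrel, hrel, and_iff_right_iff_imp]
  rintro (h | h) rfl <;> simp [Prod.ext_iff] at h

lemma adj_iff_mem [Nontrivial (ZMod m)] [Nontrivial (ZMod n)] {x q : ZMod m × ZMod n} :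
    (TorGraph m n).Adj x q ↔
      q ∈ ({x + (1, 0), x + (0, 1)} ∪ {x - (1, 0), x - (0, 1)} : Finset _) := by
  simp only [adj_iff, Finset.mem_union, Finset.mem_insert, Finset.mem_singleton,
    sub_eq_iff_eq_add', eq_sub_iff_add_eq]
  grind

def diagonalLevel {d : ℕ} (hdm : d ∣ m) (hdn : d ∣ n) : ZMod m × ZMod n →+ ZMod d :=
  (ZMod.castHom hdm (ZMod d)).toAddMonoidHom.coprod (ZMod.castHom hdn (ZMod d)).toAddMonoidHom

section Level

variable {d : ℕ} (hdm : d ∣ m) (hdn : d ∣ n)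

@[simp] lemma diagonalLevel_one_zero : diagonalLevel hdm hdn (1, 0) = 1 := by
  simp [diagonalLevel, -ZMod.castHom_apply]

@[simp] lemma diagonalLevel_zero_one : diagonalLevel hdm hdn (0, 1) = 1 := by
  simp [diagonalLevel, -ZMod.castHom_apply]

lemma diagonalLevel_ne_of_adj [Fact (1 < d)] [Nontrivial (ZMod m)] [Nontrivial (ZMod n)]
    {p q : ZMod m × ZMod n} (hpq : (TorGraph m n).Adj p q) :
    diagonalLevel hdm hdn p ≠ diagonalLevel hdm hdn q := by
  have hstep : ∀ {p q}, q - p = (1, 0) ∨ q - p = (0, 1) →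
      diagonalLevel hdm hdn q = diagonalLevel hdm hdn p + 1 := by
    rintro p q (h | h) <;> rw [← sub_add_cancel q p, h] <;> simp [add_comm]
  rcases adj_iff.mp hpq with h | h <;> rw [hstep h] <;> simp

open Classical in
lemma even_card_adj_in_level [NeZero m] [NeZero n] [Fact (2 < m)] [Fact (2 < n)]
    (x : ZMod m × ZMod n) (c : ZMod d) :
    Even ((Finset.univ.filter (diagonalLevel hdm hdn · = c)).filter
      ((TorGraph m n).Adj x)).card := by
  set σ := diagonalLevel hdm hdn
  have hnbrs : (Finset.univ.filter (σ · = c)).filter ((TorGraph m n).Adj x) =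
      ({x + (1, 0), x + (0, 1)} : Finset _).filter (σ · = c) ∪
        ({x - (1, 0), x - (0, 1)} : Finset _).filter (σ · = c) := by
    ext q
    simp only [Finset.mem_filter, Finset.mem_univ, true_and, adj_iff_mem, ← Finset.filter_union]
    tauto
  have hdisj : Disjoint ({x + (1, 0), x + (0, 1)} : Finset _) {x - (1, 0), x - (0, 1)} := by
    simp [sub_eq_add_neg, Prod.ext_iff, ZMod.neg_one_ne_one]
  rw [hnbrs, Finset.card_union_of_disjoint (Finset.disjoint_filter_filter hdisj)]
  refine (Finset.even_card_filter_pair ?_ ?_).add (Finset.even_card_filter_pair ?_ ?_)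
  · simp [Prod.ext_iff]
  · simp [σ]
  · simp [Prod.ext_iff]
  · simp [σ]

end Level

theorem bobWins [NeZero m] [NeZero n] [Fact (2 < m)] [Fact (2 < n)] {d : ℕ} [Fact (1 < d)]
    (hdm : d ∣ m) (hdn : d ∣ n) (s : ZMod m × ZMod n) : BobWins (TorGraph m n) s := by
  classical
  refine FeedbackGame.bobWins_of_even_card_adj _ (Finset.univ.filter
    (diagonalLevel hdm hdn · = diagonalLevel hdm hdn s)) (by simp) ?_ fun x _ => ?_
  · simp only [Finset.mem_filter, Finset.mem_univ, true_and]
    rintro p hp q hq hpq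
    exact diagonalLevel_ne_of_adj hdm hdn hpq (hp.trans hq.symm)
  · convert even_card_adj_in_level hdm hdn x _

end TorGraph

/-- If `m, n ≥ 3` and `gcd(m,n) > 1`, then Bob (the second player)
has a winning strategy in the feedback game on the toroidal grid graph `Q(m,n)`
with starting vertex `(0,0)`. -/
theorem feedback_bob_wins_toroidal_grid (m n : ℕ) (hm : 3 ≤ m) (hn : 3 ≤ n)
    (h : 1 < Nat.gcd m n) :
    haveI : NeZero m := ⟨by omega⟩
    haveI : NeZero n := ⟨by omega⟩
    BobWins (TorGraph m n) (0, 0) := by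
  have : NeZero m := ⟨by omega⟩
  have : NeZero n := ⟨by omega⟩
  have : Fact (2 < m) := ⟨hm⟩
  have : Fact (2 < n) := ⟨hn⟩
  have : Fact (1 < Nat.gcd m n) := ⟨h⟩
  exact TorGraph.bobWins (Nat.gcd_dvd_left m n) (Nat.gcd_dvd_right m n) (0, 0)
end

section
/- Let m, n ≥ 3 be integers with gcd(m,n) = 1. Then there is no nonempty set S of vertices of the toroidal grid graph Q(m,n) such that no two vertices of S are adjacent and every vertex not in S is adjacent to an even number of vertices of S. In particular, Q(m,n) has no even kernel with respect to any vertex. -/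
private lemma z2_add_eq_zero_iff : ∀ x y : ZMod 2, x + y = 0 ↔ x = y := by decide

private lemma z2_add_eq_iff : ∀ x y c : ZMod 2, x + y = c ↔ x = y + c := by decide

/-- If `m, n ≥ 3` and `gcd(m,n) = 1`, then there is no nonempty set
`S` of vertices of `Q(m,n)` such that no two vertices of `S` are adjacent and every
vertex not in `S` is adjacent to an even number of vertices of `S`.  In particular,
`Q(m,n)` has no even kernel with respect to any vertex. -/
theorem toroidal_grid_no_even_kernel (m n : ℕ) (hm : 3 ≤ m) (hn : 3 ≤ n)
    (h : Nat.gcd m n = 1) :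
    ¬ ∃ S : Set (ZMod m × ZMod n), S.Nonempty ∧
        (∀ u ∈ S, ∀ v ∈ S, ¬ (TorGraph m n).Adj u v) ∧
        (∀ v ∉ S, Even {u | u ∈ S ∧ (TorGraph m n).Adj v u}.ncard) := by
  classical
  rintro ⟨S, ⟨v₀, hv₀S⟩, hind, heven⟩
  haveI : NeZero m := ⟨by omega⟩
  haveI : NeZero n := ⟨by omega⟩
  haveI : Fact (1 < m) := ⟨by omega⟩
  haveI : Fact (1 < n) := ⟨by omega⟩
  have h1m : (1 : ZMod m) ≠ 0 := one_ne_zero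
  have h1n : (1 : ZMod n) ≠ 0 := one_ne_zero
  have h2m : (2 : ZMod m) ≠ 0 := by
    intro hc
    rw [show (2 : ZMod m) = ((2 : ℕ) : ZMod m) by norm_cast,
      ZMod.natCast_eq_zero_iff] at hc
    have := Nat.le_of_dvd (by norm_num) hc; omega
  have h2n : (2 : ZMod n) ≠ 0 := by
    intro hc
    rw [show (2 : ZMod n) = ((2 : ℕ) : ZMod n) by norm_cast,
      ZMod.natCast_eq_zero_iff] at hc
    have := Nat.le_of_dvd (by norm_num) hc; omega
  set f : ZMod m × ZMod n → ZMod 2 := fun v => if v ∈ S then 1 else 0 with hf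
  -- the local parity equation
  have key : ∀ (a : ZMod m) (b : ZMod n),
      f (a, b+1) + f (a+1, b) + f (a, b-1) + f (a-1, b) = 0 := by
    intro a b
    have hEv : Even {u | u ∈ S ∧ (TorGraph m n).Adj (a,b) u}.ncard := by
      by_cases hv : (a,b) ∈ S
      · have hempty : {u | u ∈ S ∧ (TorGraph m n).Adj (a,b) u} = ∅ := by
          ext u
          simp only [Set.mem_setOf_eq, Set.mem_empty_iff_false, iff_false, not_and]
          intro hu hadj
          exact hind _ hv _ hu hadj
        rw [hempty]; simp
      · exact heven _ hv
    have hsetN : {u | u ∈ S ∧ (TorGraph m n).Adj (a,b) u} =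
        ↑((({(a, b+1), (a+1, b), (a, b-1), (a-1, b)} : Finset (ZMod m × ZMod n))).filter
          (· ∈ S)) := by
      ext ⟨u1, u2⟩
      simp only [Finset.coe_filter, Set.mem_setOf_eq, Finset.mem_insert,
        Finset.mem_singleton, Prod.mk.injEq]
      constructor
      · rintro ⟨hu, hadj⟩
        refine ⟨?_, hu⟩
        simp only [TorGraph, SimpleGraph.fromRel_adj] at hadj
        obtain ⟨hne, (⟨h1, h2⟩ | ⟨h1, h2⟩) | (⟨h1, h2⟩ | ⟨h1, h2⟩)⟩ := hadj
        · exact Or.inl ⟨h1.symm, h2⟩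
        · exact Or.inr (Or.inl ⟨h2, h1.symm⟩)
        · exact Or.inr (Or.inr (Or.inl ⟨h1, eq_sub_of_add_eq h2.symm⟩))
        · exact Or.inr (Or.inr (Or.inr ⟨eq_sub_of_add_eq h2.symm, h1⟩))
      · rintro ⟨(⟨rfl, rfl⟩ | ⟨rfl, rfl⟩ | ⟨rfl, rfl⟩ | ⟨rfl, rfl⟩), hu⟩ <;>
          refine ⟨hu, (SimpleGraph.fromRel_adj _ _ _).mpr ⟨?_, ?_⟩⟩
        · simp only [ne_eq, Prod.mk.injEq, not_and]
          exact fun _ hb => h1n (by linear_combination hb.symm)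
        · exact Or.inl (Or.inl ⟨rfl, rfl⟩)
        · simp only [ne_eq, Prod.mk.injEq, not_and]
          exact fun ha _ => h1m (by linear_combination -ha)
        · exact Or.inl (Or.inr ⟨rfl, rfl⟩)
        · simp only [ne_eq, Prod.mk.injEq, not_and]
          exact fun _ hb => h1n (by linear_combination hb)
        · exact Or.inr (Or.inl ⟨rfl, by ring⟩)
        · simp only [ne_eq, Prod.mk.injEq, not_and]
          exact fun ha _ => h1m (by linear_combination ha)
        · exact Or.inr (Or.inr ⟨rfl, by ring⟩)
    rw [hsetN, Set.ncard_coe_finset] at hEv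
    have hne1 : ((a, b+1) : ZMod m × ZMod n) ≠ (a+1, b) := by
      simp only [ne_eq, Prod.mk.injEq, not_and]
      exact fun ha _ => h1m (by linear_combination -ha)
    have hne2 : ((a, b+1) : ZMod m × ZMod n) ≠ (a, b-1) := by
      simp only [ne_eq, Prod.mk.injEq, not_and]
      exact fun _ hb => h2n (by linear_combination hb)
    have hne3 : ((a, b+1) : ZMod m × ZMod n) ≠ (a-1, b) := by
      simp only [ne_eq, Prod.mk.injEq, not_and]
      exact fun ha _ => h1m (by linear_combination ha)
    have hne4 : ((a+1, b) : ZMod m × ZMod n) ≠ (a, b-1) := by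
      simp only [ne_eq, Prod.mk.injEq, not_and]
      exact fun ha _ => h1m (by linear_combination ha)
    have hne5 : ((a+1, b) : ZMod m × ZMod n) ≠ (a-1, b) := by
      simp only [ne_eq, Prod.mk.injEq, not_and]
      exact fun ha _ => h2m (by linear_combination ha)
    have hne6 : ((a, b-1) : ZMod m × ZMod n) ≠ (a-1, b) := by
      simp only [ne_eq, Prod.mk.injEq, not_and]
      exact fun ha _ => h1m (by linear_combination ha)
    rw [Finset.card_filter,
      show (({(a, b+1), (a+1, b), (a, b-1), (a-1, b)} : Finset (ZMod m × ZMod n))) =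
        insert (a, b+1) (insert (a+1, b) (insert (a, b-1)
          ({(a-1, b)} : Finset (ZMod m × ZMod n)))) from rfl,
      Finset.sum_insert (by simp [hne1, hne2, hne3]),
      Finset.sum_insert (by simp [hne4, hne5]),
      Finset.sum_insert (by simp [hne6]),
      Finset.sum_singleton] at hEv
    by_cases e1 : ((a, b+1) : ZMod m × ZMod n) ∈ S <;>
      by_cases e2 : ((a+1, b) : ZMod m × ZMod n) ∈ S <;>
      by_cases e3 : ((a, b-1) : ZMod m × ZMod n) ∈ S <;>
      by_cases e4 : ((a-1, b) : ZMod m × ZMod n) ∈ S <;>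
      simp only [hf, e1, e2, e3, e4, if_true, if_false] at hEv ⊢ <;>
      first
        | decide
        | exact absurd hEv (by decide)
  -- g is constant along antidiagonals, hence constant since gcd(m,n)=1
  set g : ZMod m → ZMod n → ZMod 2 := fun a b => f (a+1, b+1) + f (a, b) with hg
  have hgstep : ∀ (a : ZMod m) (b : ZMod n), g (a+1) b = g a (b+1) := by
    intro a b
    have hk := key (a+1) (b+1)
    rw [add_sub_cancel_right, add_sub_cancel_right] at hk
    show f (a+1+1, b+1) + f (a+1, b) = f (a+1, b+1+1) + f (a, b+1)
    rw [← z2_add_eq_zero_iff]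
    linear_combination hk
  have hgstep' : ∀ (a : ZMod m) (b : ZMod n), g a b = g (a+1) (b-1) := by
    intro a b
    have h' := hgstep a (b-1)
    have e : b - 1 + 1 = b := by ring
    rw [e] at h'
    exact h'.symm
  have hdiag : ∀ (k : ℕ) (a : ZMod m) (b : ZMod n),
      g a b = g (a + (k : ZMod m)) (b - (k : ZMod n)) := by
    intro k
    induction k with
    | zero => intro a b; simp
    | succ k ih =>
      intro a b
      have e1 : a + 1 + (k : ZMod m) = a + ((k+1 : ℕ) : ZMod m) := by push_cast; ring
      have e2 : b - 1 - (k : ZMod n) = b - ((k+1 : ℕ) : ZMod n) := by push_cast; ring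
      rw [hgstep' a b, ih (a+1) (b-1), e1, e2]
  have hco : Nat.Coprime m n := h
  have crt : ∀ (x : ZMod m) (y : ZMod n), ∃ k : ℕ, (k : ZMod m) = x ∧ (k : ZMod n) = y := by
    intro x y
    obtain ⟨k, hk1, hk2⟩ := Nat.chineseRemainder hco x.val y.val
    refine ⟨k, ?_, ?_⟩
    · rw [(ZMod.natCast_eq_natCast_iff _ _ _).mpr hk1, ZMod.natCast_rightInverse x]
    · rw [(ZMod.natCast_eq_natCast_iff _ _ _).mpr hk2, ZMod.natCast_rightInverse y]
  have hconst : ∀ (a : ZMod m) (b : ZMod n), g a b = g 0 0 := by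
    intro a b
    obtain ⟨k, hk1, hk2⟩ := crt a (-b)
    have h' := hdiag k 0 0
    rw [zero_add, zero_sub, hk1, hk2, neg_neg] at h'
    exact h'.symm
  set c : ZMod 2 := g 0 0 with hc
  have hfstep : ∀ (a : ZMod m) (b : ZMod n), f (a+1, b+1) = f (a, b) + c := by
    intro a b
    have h' := hconst a b
    exact (z2_add_eq_iff _ _ _).mp h'
  have hdiag2 : ∀ (k : ℕ) (a : ZMod m) (b : ZMod n),
      f (a + (k : ZMod m), b + (k : ZMod n)) = f (a, b) + (k : ZMod 2) * c := by
    intro k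
    induction k with
    | zero => intro a b; simp
    | succ k ih =>
      intro a b
      have e1 : a + ((k+1 : ℕ) : ZMod m) = (a + (k : ZMod m)) + 1 := by push_cast; ring
      have e2 : b + ((k+1 : ℕ) : ZMod n) = (b + (k : ZMod n)) + 1 := by push_cast; ring
      rw [e1, e2, hfstep, ih a b]
      push_cast
      ring
  -- derive the contradiction
  obtain ⟨a₀, b₀⟩ := v₀
  have hfv₀ : f (a₀, b₀) = 1 := by simp only [hf]; rw [if_pos hv₀S]
  have hnotboth : ¬ (2 ∣ m ∧ 2 ∣ n) := by
    rintro ⟨hdm, hdn⟩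
    have := Nat.dvd_gcd hdm hdn
    rw [h] at this
    omega
  have main : ∃ w : ZMod m × ZMod n, w ∈ S ∧ (TorGraph m n).Adj (a₀, b₀) w := by
    by_cases hmodd : 2 ∣ m
    · -- n is odd; move one step in the second coordinate
      have hnodd : ¬ 2 ∣ n := fun hdn => hnotboth ⟨hmodd, hdn⟩
      have hco2 : Nat.Coprime n (2 * m) :=
        Nat.Coprime.mul_right
          ((Nat.Prime.coprime_iff_not_dvd Nat.prime_two).mpr hnodd).symm hco.symm
      obtain ⟨k, hk1, hk2⟩ := Nat.chineseRemainder hco2 1 0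
      have hdvd : (2 * m) ∣ k := Nat.modEq_zero_iff_dvd.mp hk2
      have hkm : (k : ZMod m) = 0 :=
        (ZMod.natCast_eq_zero_iff _ _).mpr ((dvd_mul_left m 2).trans hdvd)
      have hk2' : (k : ZMod 2) = 0 :=
        (ZMod.natCast_eq_zero_iff _ _).mpr ((dvd_mul_right 2 m).trans hdvd)
      have hkn : (k : ZMod n) = 1 := by
        have h' := (ZMod.natCast_eq_natCast_iff _ _ _).mpr hk1
        simpa using h'
      have hval := hdiag2 k a₀ b₀
      rw [hkm, hkn, hk2', add_zero, zero_mul, add_zero, hfv₀] at hval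
      refine ⟨(a₀, b₀+1), ?_, ?_⟩
      · by_contra hns
        rw [hf] at hval
        simp only [if_neg hns] at hval
        exact zero_ne_one hval
      · refine (SimpleGraph.fromRel_adj _ _ _).mpr ⟨?_, Or.inl (Or.inl ⟨rfl, rfl⟩)⟩
        simp only [ne_eq, Prod.mk.injEq, not_and]
        exact fun _ hb => h1n (by linear_combination hb.symm)
    · -- m is odd; move one step in the first coordinate
      have hco2 : Nat.Coprime m (2 * n) :=
        Nat.Coprime.mul_right
          ((Nat.Prime.coprime_iff_not_dvd Nat.prime_two).mpr hmodd).symm hco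
      obtain ⟨k, hk1, hk2⟩ := Nat.chineseRemainder hco2 1 0
      have hdvd : (2 * n) ∣ k := Nat.modEq_zero_iff_dvd.mp hk2
      have hkn : (k : ZMod n) = 0 :=
        (ZMod.natCast_eq_zero_iff _ _).mpr ((dvd_mul_left n 2).trans hdvd)
      have hk2' : (k : ZMod 2) = 0 :=
        (ZMod.natCast_eq_zero_iff _ _).mpr ((dvd_mul_right 2 n).trans hdvd)
      have hkm : (k : ZMod m) = 1 := by
        have h' := (ZMod.natCast_eq_natCast_iff _ _ _).mpr hk1
        simpa using h'
      have hval := hdiag2 k a₀ b₀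
      rw [hkm, hkn, hk2', add_zero, zero_mul, add_zero, hfv₀] at hval
      refine ⟨(a₀+1, b₀), ?_, ?_⟩
      · by_contra hns
        rw [hf] at hval
        simp only [if_neg hns] at hval
        exact zero_ne_one hval
      · refine (SimpleGraph.fromRel_adj _ _ _).mpr ⟨?_, Or.inl (Or.inr ⟨rfl, rfl⟩)⟩
        simp only [ne_eq, Prod.mk.injEq, not_and]
        exact fun ha _ => h1m (by linear_combination -ha)
  obtain ⟨w, hwS, hadj⟩ := main
  exact hind _ hv₀S _ hwS hadj
end

section
/- Let G be a finite connected graph with a starting vertex s. If G has an even kernel with respect to s, then Bob (the second player) has a winning strategy in the feedback game on G with starting vertex s. -/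
/-- `S` is an even kernel of `G` with respect to `st`: a nonempty set of vertices
containing `st`, no two of whose elements are adjacent, and such that every vertex
not in `S` is adjacent to an even number (possibly `0`) of vertices of `S`. -/
def EvenKernel {V : Type*} (G : SimpleGraph V) (st : V) (S : Set V) : Prop :=
  S.Nonempty ∧ st ∈ S ∧ (∀ u ∈ S, ∀ v ∈ S, ¬ G.Adj u v) ∧
    ∀ v ∉ S, Even {u | u ∈ S ∧ G.Adj v u}.ncard

/-!
Bob keeps the token inside the even kernel `S`. The remaining edges never join two vertices of
`S`, and every vertex outside `S` keeps an even number of remaining edges into `S`. Alice must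
leave `S` along such an edge to some `v ∉ S`, so `v ≠ s` and `v` is left with an odd, hence
positive, number of edges into `S`: `v` is not a dead end, and Bob answers along one of them.
Both moves together delete two edges at `v` and none at any other vertex outside `S`, so the
invariant is restored with the token back in `S`.
-/

section

variable {V : Type*}

def neighborsIn (S : Set V) (E : Finset (Sym2 V)) (v : V) : Set V :=
  {w | w ∈ S ∧ s(v, w) ∈ E}

lemma finite_neighborsIn (S : Set V) (E : Finset (Sym2 V)) (v : V) :
    (neighborsIn S E v).Finite :=
  (E.finite_toSet.preimage fun _ _ _ _ h => Sym2.congr_right.1 h).subset fun _ hw => hw.2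

section erase

variable [DecidableEq V] {S : Set V} {E : Finset (Sym2 V)}

lemma ncard_neighborsIn_erase_add_one {v w : V} (hw : w ∈ neighborsIn S E v) :
    (neighborsIn S (E.erase s(v, w)) v).ncard + 1 = (neighborsIn S E v).ncard := by
  have : neighborsIn S (E.erase s(v, w)) v = neighborsIn S E v \ {w} := by
    ext x
    simp only [neighborsIn, Set.mem_sdiff, Set.mem_singleton_iff, Set.mem_ofPred_eq,
      Finset.mem_erase, ne_eq, Sym2.congr_right]
    tauto
  rw [this, Set.ncard_sdiff_singleton_add_one hw (finite_neighborsIn S E v)]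

lemma neighborsIn_erase_of_ne {a b x : V} (ha : x ≠ a) (hb : x ≠ b) :
    neighborsIn S (E.erase s(a, b)) x = neighborsIn S E x := by
  ext w
  simp only [neighborsIn, Set.mem_ofPred_eq, Finset.mem_erase, ne_eq, and_congr_right_iff,
    and_iff_right_iff_imp]
  intro _ _ h
  exact (Sym2.eq_iff.1 h).elim (fun h => ha h.1) (fun h => hb h.1)

end erase

/-- `S` is an even kernel of the graph with edge set `E`, the starting vertex aside. -/
structure IsEvenKernelOfEdges (E : Finset (Sym2 V)) (S : Set V) : Prop where
  not_mem_of_mem_of_mem : ∀ a ∈ S, ∀ b ∈ S, s(a, b) ∉ E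
  even_ncard_neighborsIn : ∀ v ∉ S, Even (neighborsIn S E v).ncard

namespace IsEvenKernelOfEdges

variable {S : Set V}

section move

variable {E : Finset (Sym2 V)} {u v w : V}

lemma not_mem_of_move (hK : IsEvenKernelOfEdges E S) (hu : u ∈ S) (huv : s(u, v) ∈ E) :
    v ∉ S :=
  fun hv => hK.not_mem_of_mem_of_mem u hu v hv huv

variable [DecidableEq V]

lemma odd_ncard_neighborsIn_erase (hK : IsEvenKernelOfEdges E S) (hu : u ∈ S)
    (huv : s(u, v) ∈ E) : Odd (neighborsIn S (E.erase s(u, v)) v).ncard := by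
  have hcard := ncard_neighborsIn_erase_add_one (S := S) (E := E) ⟨hu, Sym2.eq_swap ▸ huv⟩
  rw [Sym2.eq_swap, ← Nat.not_even_iff_odd, ← Nat.even_add_one, hcard]
  exact hK.even_ncard_neighborsIn v (hK.not_mem_of_move hu huv)

lemma exists_reply (hK : IsEvenKernelOfEdges E S) (hu : u ∈ S) (huv : s(u, v) ∈ E) :
    ∃ w ∈ S, s(v, w) ∈ E.erase s(u, v) :=
  Set.nonempty_of_ncard_ne_zero (hK.odd_ncard_neighborsIn_erase hu huv).pos.ne'

lemma erase_erase (hK : IsEvenKernelOfEdges E S) (hu : u ∈ S) (huv : s(u, v) ∈ E) (hw : w ∈ S)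
    (hvw : s(v, w) ∈ E.erase s(u, v)) :
    IsEvenKernelOfEdges ((E.erase s(u, v)).erase s(v, w)) S where
  not_mem_of_mem_of_mem a ha b hb hab :=
    hK.not_mem_of_mem_of_mem a ha b hb (Finset.mem_of_mem_erase (Finset.mem_of_mem_erase hab))
  even_ncard_neighborsIn x hx := by
    obtain rfl | hxv := eq_or_ne x v
    · have hodd := hK.odd_ncard_neighborsIn_erase hu huv
      rwa [← ncard_neighborsIn_erase_add_one ⟨hw, hvw⟩, Nat.odd_add_one, Nat.not_odd_iff_even]
        at hodd
    · rw [neighborsIn_erase_of_ne hxv (ne_of_mem_of_not_mem hw hx).symm,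
        neighborsIn_erase_of_ne (ne_of_mem_of_not_mem hu hx).symm hxv]
      exact hK.even_ncard_neighborsIn x hx

end move

theorem not_feedbackWin [DecidableEq V] {E : Finset (Sym2 V)} (hK : IsEvenKernelOfEdges E S)
    {st u : V} (hst : st ∈ S) (hu : u ∈ S) : ¬ FeedbackWin st E u := by
  rw [FeedbackWin]
  rintro ⟨v, huv, hwin⟩
  obtain ⟨w, hw, hvw⟩ := hK.exists_reply hu huv
  rcases hwin with rfl | hdead | hlose
  · exact hK.not_mem_of_move hu huv hst
  · exact hdead _ hvw (Sym2.mem_mk_left v w)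
  · rw [FeedbackWin] at hlose
    exact hlose ⟨w, hvw, .inr (.inr ((hK.erase_erase hu huv hw hvw).not_feedbackWin hst hw))⟩
termination_by E.card
decreasing_by
  exact (Finset.card_erase_lt_of_mem hvw).trans (Finset.card_erase_lt_of_mem huv)

end IsEvenKernelOfEdges

lemma EvenKernel.isEvenKernelOfEdges [Finite V] {G : SimpleGraph V} {st : V} {S : Set V}
    (hS : EvenKernel G st S) : IsEvenKernelOfEdges G.edgeSet.toFinite.toFinset S where
  not_mem_of_mem_of_mem a ha b hb := by simpa using hS.2.2.1 a ha b hb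
  even_ncard_neighborsIn v hv := by simpa [neighborsIn] using hS.2.2.2 v hv

end

theorem even_kernel_bob_wins_general {V : Type*} [Finite V] [DecidableEq V]
    (G : SimpleGraph V) (s : V)
    (h : ∃ S : Set V, EvenKernel G s S) :
    BobWins G s := by
  obtain ⟨S, hS⟩ := h
  exact hS.isEvenKernelOfEdges.not_feedbackWin hS.2.1 hS.2.1

/-- If a finite connected graph `G` has an even kernel with respect
to the starting vertex `s`, then Bob (the second player) has a winning strategy in
the feedback game on `G` with starting vertex `s`. -/
theorem even_kernel_bob_wins {V : Type*} [Finite V] [DecidableEq V]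
    (G : SimpleGraph V) (s : V) (hconn : G.Connected)
    (h : ∃ S : Set V, EvenKernel G s S) :
    BobWins G s :=
  even_kernel_bob_wins_general G s h
end

section
/- Let G be a finite connected bipartite Eulerian graph (every vertex has even degree) with at least one edge, and let s be any vertex of G. Then Bob (the second player) has a winning strategy in the feedback game on G with starting vertex s. -/
/-!
Fix a proper 2-colouring of `G`. After a play from `s` to `u`, the used edges form a trail from
`s` to `u`, so in an Eulerian graph the unused edges have odd degree exactly at `u` and `s` if
`u ≠ s`, and nowhere if `u = s`. Under this invariant the player to move wins iff `u` and `s`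
have different colours. If they do, `u ≠ s` has odd degree, so a move exists, and it leads to the
colour of `s`. If they do not, every move leads to a vertex `v ≠ s` of the other colour, which
keeps odd, hence nonzero, degree. Alice starts on `s` itself, so she loses.
-/

open Finset

theorem SimpleGraph.Coloring.ne_iff_eq_of_adj {V : Type*} {G : SimpleGraph V}
    (c : G.Coloring (Fin 2)) {u v : V} (h : G.Adj u v) (w : V) : c v ≠ c w ↔ c u = c w := by
  have two_colors : ∀ a b d : Fin 2, a ≠ b → (b ≠ d ↔ a = d) := by decide
  exact two_colors _ _ _ (c.valid h)

namespace FeedbackGame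

variable {V : Type*} [DecidableEq V]

def incidenceDegree (E : Finset (Sym2 V)) (w : V) : ℕ := #{e ∈ E | w ∈ e}

theorem incidenceDegree_erase_add_one {E : Finset (Sym2 V)} {e : Sym2 V} {w : V}
    (he : e ∈ E) (hw : w ∈ e) : incidenceDegree (E.erase e) w + 1 = incidenceDegree E w := by
  rw [incidenceDegree, incidenceDegree, filter_erase,
    card_erase_add_one (mem_filter.2 ⟨he, hw⟩)]

theorem incidenceDegree_erase_of_notMem {E : Finset (Sym2 V)} {e : Sym2 V} {w : V}
    (hw : w ∉ e) : incidenceDegree (E.erase e) w = incidenceDegree E w := by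
  rw [incidenceDegree, incidenceDegree, filter_erase]
  exact congrArg card (erase_eq_of_notMem fun h => hw (mem_filter.1 h).2)

theorem exists_mem_of_odd_incidenceDegree {E : Finset (Sym2 V)} {w : V}
    (h : Odd (incidenceDegree E w)) : ∃ v, s(w, v) ∈ E := by
  obtain ⟨e, he⟩ := card_pos.1 h.pos
  obtain ⟨heE, hwe⟩ := mem_filter.1 he
  obtain ⟨v, rfl⟩ := Sym2.mem_iff_exists.1 hwe
  exact ⟨v, heE⟩

theorem incidenceDegree_toFinset_edgeSet [Finite V] (G : SimpleGraph V) (w : V) :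
    incidenceDegree G.edgeSet.toFinite.toFinset w = (G.neighborSet w).ncard := by
  have hinc : (({e ∈ G.edgeSet.toFinite.toFinset | w ∈ e} : Finset (Sym2 V)) : Set (Sym2 V)) =
      G.incidenceSet w := by
    ext e
    simp [SimpleGraph.incidenceSet]
  rw [incidenceDegree, ← Set.ncard_coe_finset, hinc, ← Nat.card_coe_set_eq,
    Nat.card_congr (G.incidenceSetEquivNeighborSet w), Nat.card_coe_set_eq]

/-- The parity pattern of the unused edges `E` after a trail from `s` to `u` has been removed
from an Eulerian graph. -/
def TrailParity (E : Finset (Sym2 V)) (s u : V) : Prop :=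
  ∀ w, Odd (incidenceDegree E w) ↔ Xor (w = u) (w = s)

theorem TrailParity.erase {E : Finset (Sym2 V)} {s u v : V} (h : TrailParity E s u)
    (huv : s(u, v) ∈ E) (hne : u ≠ v) : TrailParity (E.erase s(u, v)) s v := by
  intro w
  by_cases hw : w ∈ s(u, v)
  · rw [← not_iff_not, ← Nat.odd_add_one, incidenceDegree_erase_add_one huv hw, h w]
    rcases Sym2.mem_iff.1 hw with rfl | rfl
    · simp [hne]
    · simp [hne.symm]
  · obtain ⟨hwu, hwv⟩ : w ≠ u ∧ w ≠ v := by simpa [not_or] using hw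
    rw [incidenceDegree_erase_of_notMem hw, h w]
    simp [hwu, hwv]

theorem TrailParity.eq_of_isolated {E : Finset (Sym2 V)} {s u : V} (h : TrailParity E s u)
    (hu : ∀ e ∈ E, u ∉ e) : u = s := by
  have hzero : incidenceDegree E u = 0 := by
    rw [incidenceDegree, card_eq_zero, filter_eq_empty_iff]
    exact hu
  simpa [hzero] using h u

theorem feedbackWin_iff_color_ne {G : SimpleGraph V} (c : G.Coloring (Fin 2)) {s u : V}
    {E : Finset (Sym2 V)} (hE : (E : Set (Sym2 V)) ⊆ G.edgeSet) (hpar : TrailParity E s u) :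
    FeedbackWin s E u ↔ c u ≠ c s := by
  induction E using Finset.strongInduction generalizing u with
  | H E ih =>
  have hstep : ∀ v, s(u, v) ∈ E →
      (v = s ∨ (∀ e ∈ E.erase s(u, v), v ∉ e) ∨ ¬FeedbackWin s (E.erase s(u, v)) v ↔
        c u ≠ c s) := by
    intro v huv
    have hadj : G.Adj u v := hE huv
    have hpar' := hpar.erase huv hadj.ne
    rw [ih _ (erase_ssubset huv) ((coe_subset.2 (erase_subset _ _)).trans hE) hpar',
      not_not, c.ne_iff_eq_of_adj hadj.symm s]
    constructor
    · rintro (rfl | hdead | hvs)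
      · rfl
      · exact congrArg c (hpar'.eq_of_isolated hdead)
      · exact hvs
    · exact fun hvs => Or.inr (Or.inr hvs)
  rw [FeedbackWin]
  constructor
  · rintro ⟨v, huv, hgood⟩
    exact (hstep v huv).1 hgood
  · intro hus
    have hodd : Odd (incidenceDegree E u) := (hpar u).2 (by simpa using ne_of_apply_ne c hus)
    obtain ⟨v, huv⟩ := exists_mem_of_odd_incidenceDegree hodd
    exact ⟨v, huv, (hstep v huv).2 hus⟩

end FeedbackGame

open FeedbackGame

theorem feedback_bob_wins_bipartite_eulerian_general {V : Type*} [Finite V] [DecidableEq V]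
    (G : SimpleGraph V) (hbip : G.Colorable 2)
    (heul : ∀ v : V, Even (G.neighborSet v).ncard) (s : V) :
    BobWins G s := by
  obtain ⟨c⟩ := hbip
  have hstart : TrailParity G.edgeSet.toFinite.toFinset s s := fun w => by
    simp [incidenceDegree_toFinset_edgeSet, ← Nat.not_even_iff_odd, heul w]
  exact fun hAlice =>
    (feedbackWin_iff_color_ne c (Set.Finite.coe_toFinset _).subset hstart).1 hAlice rfl

/-- Let `G` be a finite connected bipartite Eulerian graph (every
vertex has even degree) with at least one edge, and let `s` be any vertex.  Then
Bob (the second player) has a winning strategy in the feedback game on `G` with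
starting vertex `s`. -/
theorem feedback_bob_wins_bipartite_eulerian {V : Type*} [Finite V] [DecidableEq V]
    (G : SimpleGraph V) (hconn : G.Connected) (hbip : G.Colorable 2)
    (heul : ∀ v : V, Even (G.neighborSet v).ncard)
    (hedge : G.edgeSet.Nonempty) (s : V) :
    BobWins G s :=
  feedback_bob_wins_bipartite_eulerian_general G hbip heul s
end

section
/- Let G be a finite connected bipartite Eulerian graph (every vertex has even degree), let {X, Y} be its bipartition into two independent sets, and let s ∈ X. Then X is an even kernel of G with respect to s; that is, X is nonempty, contains s, no two vertices of X are adjacent, and every vertex not in X is adjacent to an even number of vertices of X. -/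
/-- Let `G` be a finite connected bipartite Eulerian graph with
bipartition `{X, Y}` into two independent sets, and let `s ∈ X`.  Then `X` is an
even kernel of `G` with respect to `s`. -/
theorem bipartition_class_is_even_kernel {V : Type*} [Finite V]
    (G : SimpleGraph V) (s : V) (X Y : Set V)
    (hconn : G.Connected)
    (heul : ∀ v : V, Even (G.neighborSet v).ncard)
    (hcover : ∀ v : V, v ∈ X ∨ v ∈ Y)
    (hdisj : ∀ v : V, ¬ (v ∈ X ∧ v ∈ Y))
    (hX : ∀ u ∈ X, ∀ v ∈ X, ¬ G.Adj u v)
    (hY : ∀ u ∈ Y, ∀ v ∈ Y, ¬ G.Adj u v)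
    (hs : s ∈ X) :
    EvenKernel G s X := by
  refine ⟨⟨s, hs⟩, hs, hX, ?_⟩
  intro v hv
  have hvY : v ∈ Y := (hcover v).resolve_left hv
  have : {u | u ∈ X ∧ G.Adj v u} = G.neighborSet v := by
    ext u
    simp only [Set.mem_setOf_eq, SimpleGraph.mem_neighborSet]
    constructor
    · exact fun h => h.2
    · intro h
      refine ⟨(hcover u).resolve_right fun hu => hY v hvY u hu h, h⟩
  rw [this]
  exact heul v
end

section
/- For every integer k ≥ 2, Bob (the second player) has a winning strategy in the feedback game on the graph G_k with starting vertex s. -/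
/-- Vertices of the graph `G_k`: `some (Sum.inl i)` is the cycle vertex `u i`
(`i ∈ ZMod (2k)`), `some (Sum.inr j)` is the cycle vertex `v j` (`j ∈ ZMod (4k)`),
and `none` is the starting vertex `s`. -/
abbrev GkVert (k : ℕ) : Type := Option (ZMod (2 * k) ⊕ ZMod (4 * k))

/-- Base relation generating the edges of `G_k`: the cycle `u_0 u_1 … u_{2k-1}`,
the cycle `v_0 v_1 … v_{4k-1}`, the edges `u_i v_{2i}` and `u_i v_{2i+1}`, and
the edges `s v_j` for every `j`. -/
def GkRel (k : ℕ) : GkVert k → GkVert k → Prop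
  | some (Sum.inl i), some (Sum.inl i') => i' = i + 1
  | some (Sum.inr j), some (Sum.inr j') => j' = j + 1
  | some (Sum.inl i), some (Sum.inr j) =>
      j = ((2 * i.val : ℕ) : ZMod (4 * k)) ∨ j = ((2 * i.val + 1 : ℕ) : ZMod (4 * k))
  | none, some (Sum.inr _) => True
  | _, _ => False

/-- The graph `G_k` from the paper (Proposition on graphs without even kernel
graphs on which Bob wins). -/
def GkGraph (k : ℕ) : SimpleGraph (GkVert k) := SimpleGraph.fromRel (GkRel k)

/-- The starting vertex `s` of `G_k`. -/
def gkStart (k : ℕ) : GkVert k := none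


theorem feedbackWin_iff {V : Type*} [DecidableEq V] {st u : V} {E : Finset (Sym2 V)} :
    FeedbackWin st E u ↔ ∃ v, ∃ _ : s(u, v) ∈ E,
      v = st ∨ (∀ e ∈ E.erase s(u, v), v ∉ e) ∨ ¬ FeedbackWin st (E.erase s(u, v)) v := by
  rw [FeedbackWin]

namespace FeedbackWin

variable {V : Type*} [DecidableEq V] {st u v : V} {E : Finset (Sym2 V)}

theorem of_not (h : s(u, v) ∈ E) (hv : ¬ FeedbackWin st (E.erase s(u, v)) v) :
    FeedbackWin st E u :=
  feedbackWin_iff.mpr ⟨v, h, Or.inr (Or.inr hv)⟩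

theorem of_mem_start (h : s(u, st) ∈ E) : FeedbackWin st E u :=
  feedbackWin_iff.mpr ⟨st, h, Or.inl rfl⟩

/-- A position won by the player to move has a remaining edge at the token, so a move into it
never ends the game at a dead end. -/
theorem not_of_forall (h : ∀ v, s(u, v) ∈ E → v ≠ st ∧ FeedbackWin st (E.erase s(u, v)) v) :
    ¬ FeedbackWin st E u := by
  intro hwin
  obtain ⟨v, hv, hstart | hdead | hlose⟩ := feedbackWin_iff.mp hwin
  · exact (h v hv).1 hstart
  · obtain ⟨w, hw, -⟩ := feedbackWin_iff.mp (h v hv).2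
    exact hdead _ hw (Sym2.mem_mk_left v w)
  · exact hlose (h v hv).2

end FeedbackWin

theorem ZMod.two_ne_zero_of_three_le {n : ℕ} (hn : 3 ≤ n) : (2 : ZMod n) ≠ 0 := by
  intro h
  have := Nat.le_of_dvd two_pos ((ZMod.natCast_eq_zero_iff 2 n).mp (by exact_mod_cast h))
  omega

theorem mul_self_eq_one_of_eq_one_or {R : Type*} [Ring R] {d : R} (hd : d = 1 ∨ d = -1) :
    d * d = 1 := by
  rcases hd with rfl | rfl <;> norm_num

section Gk

variable {k : ℕ}

local notation "𝔲" i:max => (some (Sum.inl i) : GkVert k)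
local notation "𝔳" j:max => (some (Sum.inr j) : GkVert k)

noncomputable def gkEdges (k : ℕ) [NeZero (2 * k)] [NeZero (4 * k)] : Finset (Sym2 (GkVert k)) :=
  (GkGraph k).edgeSet.toFinite.toFinset

theorem mem_gkEdges [NeZero (2 * k)] [NeZero (4 * k)] {a b : GkVert k} :
    s(a, b) ∈ gkEdges k ↔ (GkGraph k).Adj a b := by
  rw [gkEdges, Set.Finite.mem_toFinset, SimpleGraph.mem_edgeSet]

def innerNbr (j : ZMod (4 * k)) : ZMod (2 * k) := (j.val / 2 : ℕ)

theorem val_innerNbr [NeZero (4 * k)] (j : ZMod (4 * k)) : (innerNbr j).val = j.val / 2 :=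
  ZMod.val_cast_of_lt (by have := j.val_lt; omega)

theorem gkRel_inner_outer_iff [NeZero (2 * k)] [NeZero (4 * k)] {w : ZMod (2 * k)}
    {m : ZMod (4 * k)} : GkRel k (𝔲 w) (𝔳 m) ↔ w = innerNbr m := by
  rw [← (ZMod.val_injective _).eq_iff, val_innerNbr]
  change m = _ ∨ m = _ ↔ _
  have hw := w.val_lt
  constructor
  · rintro (rfl | rfl) <;> rw [ZMod.val_cast_of_lt (by omega)] <;> omega
  · intro h
    rw [← ZMod.natCast_zmod_val m]
    rcases (by omega : m.val = 2 * w.val ∨ m.val = 2 * w.val + 1) with h' | h' <;> simp [h']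

theorem gkGraph_adj {a b : GkVert k} :
    (GkGraph k).Adj a b ↔ a ≠ b ∧ (GkRel k a b ∨ GkRel k b a) :=
  SimpleGraph.fromRel_adj _ _ _

theorem gkGraph_adj_outer_start (m : ZMod (4 * k)) : (GkGraph k).Adj (𝔳 m) none :=
  gkGraph_adj.mpr ⟨by simp, Or.inr trivial⟩

theorem exists_eq_outer_of_gkGraph_adj_start {v : GkVert k} (h : (GkGraph k).Adj none v) :
    ∃ m, v = 𝔳 m := by
  rcases v with _ | (i | m) <;> simp_all [gkGraph_adj, GkRel]

theorem gkGraph_adj_inner_outer_iff [NeZero (2 * k)] [NeZero (4 * k)] {w : ZMod (2 * k)}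
    {m : ZMod (4 * k)} : (GkGraph k).Adj (𝔲 w) (𝔳 m) ↔ w = innerNbr m := by
  rw [gkGraph_adj, ← gkRel_inner_outer_iff]
  simp [GkRel]

theorem gkGraph_adj_inner_add (hk : 2 ≤ k) {d : ZMod (2 * k)} (hd : d = 1 ∨ d = -1)
    (w : ZMod (2 * k)) : (GkGraph k).Adj (𝔲 w) (𝔲 (w + d)) := by
  have : Nontrivial (ZMod (2 * k)) := ZMod.nontrivial_iff.mpr (by omega)
  rcases hd with rfl | rfl
  · exact gkGraph_adj.mpr ⟨by simp, Or.inl rfl⟩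
  · refine gkGraph_adj.mpr ⟨by simp, Or.inr ?_⟩
    change w = w + -1 + 1
    ring

theorem gkGraph_adj_inner_cases [NeZero (2 * k)] [NeZero (4 * k)] {d : ZMod (2 * k)}
    (hd : d = 1 ∨ d = -1) {w : ZMod (2 * k)} {v : GkVert k} (h : (GkGraph k).Adj (𝔲 w) v) :
    v = 𝔲 (w + d) ∨ v = 𝔲 (w - d) ∨ ∃ m, v = 𝔳 m ∧ w = innerNbr m := by
  rcases v with _ | (i | m)
  · simp [gkGraph_adj, GkRel] at h
  · have : i = w + 1 ∨ i = w - 1 := by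
      rcases (gkGraph_adj.mp h).2 with h | h
      · exact Or.inl h
      · exact Or.inr (eq_sub_of_add_eq h.symm)
    rcases hd with rfl | rfl
    · simpa using this
    · simpa [sub_eq_add_neg, or_comm] using this
  · exact Or.inr (Or.inr ⟨m, rfl, gkGraph_adj_inner_outer_iff.mp h⟩)

section Strategy

variable {j : ZMod (4 * k)} {d : ZMod (2 * k)}

def cyclePos (j : ZMod (4 * k)) (d : ZMod (2 * k)) (t : ℕ) : ZMod (2 * k) := innerNbr j + d * t

def cycleEdge (j : ZMod (4 * k)) (d : ZMod (2 * k)) (t : ℕ) : Sym2 (GkVert k) :=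
  s(𝔲 (cyclePos j d t), 𝔲 (cyclePos j d (t + 1)))

theorem cyclePos_succ (t : ℕ) : cyclePos j d (t + 1) = cyclePos j d t + d := by
  simp only [cyclePos]; push_cast; ring

theorem cyclePos_two_mul : cyclePos j d (2 * k) = cyclePos j d 0 := by
  simp [cyclePos]

theorem eq_of_cyclePos_eq (hd : d = 1 ∨ d = -1) {r t : ℕ} (hr : r < 2 * k) (ht : t < 2 * k)
    (h : cyclePos j d r = cyclePos j d t) : r = t := by
  have hcast : (r : ZMod (2 * k)) = t := by
    have := congrArg (d * ·) (add_left_cancel h)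
    simpa [← mul_assoc, mul_self_eq_one_of_eq_one_or hd] using this
  rwa [ZMod.natCast_eq_natCast_iff', Nat.mod_eq_of_lt hr, Nat.mod_eq_of_lt ht] at hcast

theorem eq_of_cycleEdge_eq (hk : 2 ≤ k) (hd : d = 1 ∨ d = -1) {r t : ℕ} (hr : r < 2 * k)
    (ht : t < 2 * k) (h : cycleEdge j d r = cycleEdge j d t) : r = t := by
  simp only [cycleEdge, Sym2.eq_iff, Option.some_inj, Sum.inl.injEq, cyclePos_succ] at h
  rcases h with ⟨h, -⟩ | ⟨h₁, h₂⟩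
  · exact eq_of_cyclePos_eq hd hr ht h
  · refine (ZMod.two_ne_zero_of_three_le (n := 2 * k) (by omega) ?_).elim
    linear_combination (h₂ - h₁) * d - 2 * mul_self_eq_one_of_eq_one_or hd

theorem cycleEdge_eq_mk_add (t : ℕ) :
    cycleEdge j d t = s(𝔲 (cyclePos j d t), 𝔲 (cyclePos j d t + d)) := by
  rw [cycleEdge, cyclePos_succ]

theorem cycleEdge_eq_mk_sub (t : ℕ) :
    cycleEdge j d t = s(𝔲 (cyclePos j d (t + 1)), 𝔲 (cyclePos j d (t + 1) - d)) := by
  rw [cycleEdge, cyclePos_succ, add_sub_cancel_right, Sym2.eq_swap]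

variable [NeZero (2 * k)] [NeZero (4 * k)]

/-- The edges left once Alice has opened with `s → v_j`, Bob has replied `v_j → u_⌊j/2⌋`, and
the token has then made `t` steps round the inner cycle in direction `d`. -/
noncomputable def remainingEdges (j : ZMod (4 * k)) (d : ZMod (2 * k)) :
    ℕ → Finset (Sym2 (GkVert k))
  | 0 => ((gkEdges k).erase s(none, 𝔳 j)).erase s(𝔳 j, 𝔲 (innerNbr j))
  | t + 1 => (remainingEdges j d t).erase (cycleEdge j d t)

theorem mem_remainingEdges {e : Sym2 (GkVert k)} {t : ℕ} :
    e ∈ remainingEdges j d t ↔ e ∈ gkEdges k ∧ e ≠ s(none, 𝔳 j) ∧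
      e ≠ s(𝔳 j, 𝔲 (innerNbr j)) ∧ ∀ r < t, e ≠ cycleEdge j d r := by
  induction t with
  | zero =>
    simp only [remainingEdges, Finset.mem_erase, Nat.not_lt_zero]
    tauto
  | succ t ih =>
    simp only [remainingEdges, Finset.mem_erase, ih, Nat.lt_succ_iff_lt_or_eq]
    grind

theorem cycleEdge_mem_remainingEdges (hk : 2 ≤ k) (hd : d = 1 ∨ d = -1) {t : ℕ}
    (ht : t < 2 * k) : cycleEdge j d t ∈ remainingEdges j d t := by
  refine mem_remainingEdges.mpr ⟨?_, by simp [cycleEdge], by simp [cycleEdge], fun r hr h => ?_⟩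
  · rw [cycleEdge, mem_gkEdges, cyclePos_succ]
    exact gkGraph_adj_inner_add hk hd _
  · exact absurd (eq_of_cycleEdge_eq hk hd ht (by omega) h) (by omega)

theorem cycleEdge_not_mem_remainingEdges {r t : ℕ} (h : r < t) :
    cycleEdge j d r ∉ remainingEdges j d t :=
  fun hr => (mem_remainingEdges.mp hr).2.2.2 r h rfl

theorem outer_start_mem_erase_remainingEdges {w : ZMod (2 * k)} {m : ZMod (4 * k)} {t : ℕ}
    (h : s(𝔲 w, 𝔳 m) ∈ remainingEdges j d t) :
    s(𝔳 m, none) ∈ (remainingEdges j d t).erase s(𝔲 w, 𝔳 m) := by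
  obtain ⟨hE, -, hspoke, -⟩ := mem_remainingEdges.mp h
  have hw : w = innerNbr m := gkGraph_adj_inner_outer_iff.mp (mem_gkEdges.mp hE)
  have hm : m ≠ j := by
    rintro rfl
    exact hspoke (by rw [hw, Sym2.eq_swap])
  refine Finset.mem_erase.mpr ⟨by simp, mem_remainingEdges.mpr ⟨?_, ?_, by simp, ?_⟩⟩
  · exact mem_gkEdges.mpr (gkGraph_adj_outer_start m)
  · simpa [Sym2.eq_iff] using hm
  · intro r _
    simp [cycleEdge]

theorem feedbackWin_after_cycle_move (hk : 2 ≤ k) (hd : d = 1 ∨ d = -1) {s : ℕ} (hs : s < k)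
    (hlose : ¬ FeedbackWin none (remainingEdges j d (2 * (s + 1)))
      (𝔲 (cyclePos j d (2 * (s + 1))))) :
    FeedbackWin none
      ((remainingEdges j d (2 * s)).erase s(𝔲 (cyclePos j d (2 * s)), 𝔲 (cyclePos j d (2 * s) + d)))
      (𝔲 (cyclePos j d (2 * s) + d)) := by
  rw [← cyclePos_succ]
  exact FeedbackWin.of_not (cycleEdge_mem_remainingEdges hk hd (by omega)) hlose

theorem not_feedbackWin_cyclePos_of_succ (hk : 2 ≤ k) {s : ℕ} (hs : s ≤ k)
    (ih : s < k → ∀ d' : ZMod (2 * k), (d' = 1 ∨ d' = -1) →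
      ¬ FeedbackWin none (remainingEdges j d' (2 * (s + 1))) (𝔲 (cyclePos j d' (2 * (s + 1)))))
    (hd : d = 1 ∨ d = -1) :
    ¬ FeedbackWin none (remainingEdges j d (2 * s)) (𝔲 (cyclePos j d (2 * s))) := by
  refine FeedbackWin.not_of_forall fun v hv => ?_
  rcases gkGraph_adj_inner_cases hd (mem_gkEdges.mp (mem_remainingEdges.mp hv).1)
    with rfl | rfl | ⟨m, rfl, -⟩
  · refine ⟨by simp, ?_⟩
    rcases hs.lt_or_eq with hs | rfl
    · exact feedbackWin_after_cycle_move hk hd hs (ih hs d hd)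
    · rw [cyclePos_two_mul, ← cycleEdge_eq_mk_add] at hv
      exact absurd hv (cycleEdge_not_mem_remainingEdges (by omega))
  · refine ⟨by simp, ?_⟩
    rcases Nat.eq_zero_or_pos s with rfl | hpos
    · -- turning back at the start is a forward move in direction `-d`
      have hnd : -d = 1 ∨ -d = -1 := by rcases hd with rfl | rfl <;> simp
      have := feedbackWin_after_cycle_move hk hnd (by omega) (ih (by omega) (-d) hnd)
      simp only [cyclePos, Nat.cast_zero, mul_zero, add_zero, sub_eq_add_neg] at this ⊢
      exact this
    · obtain ⟨t, ht⟩ : ∃ t, 2 * s = t + 1 := ⟨2 * s - 1, by omega⟩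
      rw [ht, ← cycleEdge_eq_mk_sub] at hv
      exact absurd hv (cycleEdge_not_mem_remainingEdges (by omega))
  · exact ⟨by simp, FeedbackWin.of_mem_start (outer_start_mem_erase_remainingEdges hv)⟩

theorem not_feedbackWin_cyclePos (hk : 2 ≤ k) {s : ℕ} (hs : s ≤ k) (hd : d = 1 ∨ d = -1) :
    ¬ FeedbackWin none (remainingEdges j d (2 * s)) (𝔲 (cyclePos j d (2 * s))) := by
  induction hs using Nat.decreasingInduction generalizing d with
  | self => exact not_feedbackWin_cyclePos_of_succ hk le_rfl (absurd · (lt_irrefl k)) hd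
  | of_succ s hs ih => exact not_feedbackWin_cyclePos_of_succ hk hs.le (fun _ _ => ih) hd

theorem feedbackWin_after_opening (hk : 2 ≤ k) (j : ZMod (4 * k)) :
    FeedbackWin none ((gkEdges k).erase s(none, 𝔳 j)) (𝔳 j) := by
  refine FeedbackWin.of_not (v := 𝔲 (innerNbr j)) ?_ ?_
  · refine Finset.mem_erase.mpr ⟨by simp, mem_gkEdges.mpr ?_⟩
    exact (gkGraph_adj_inner_outer_iff.mpr rfl).symm
  · have := not_feedbackWin_cyclePos (j := j) (d := 1) hk (Nat.zero_le k) (Or.inl rfl)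
    simp only [cyclePos, Nat.cast_zero, mul_zero, add_zero] at this
    exact this

end Strategy

end Gk

/-- For every integer `k ≥ 2`, Bob (the second player) has a
winning strategy in the feedback game on the graph `G_k` with starting vertex `s`. -/
theorem feedback_bob_wins_Gk (k : ℕ) (hk : 2 ≤ k) :
    haveI : NeZero (2 * k) := ⟨by omega⟩
    haveI : NeZero (4 * k) := ⟨by omega⟩
    BobWins (GkGraph k) (gkStart k) := by
  have : NeZero (2 * k) := ⟨by omega⟩
  have : NeZero (4 * k) := ⟨by omega⟩
  refine FeedbackWin.not_of_forall fun v hv => ?_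
  obtain ⟨j, rfl⟩ := exists_eq_outer_of_gkGraph_adj_start (mem_gkEdges.mp hv)
  exact ⟨by simp [gkStart], feedbackWin_after_opening hk j⟩
end

section
/- For every integer k ≥ 2, the graph G_k has no even kernel with respect to the starting vertex s; that is, there is no nonempty set S of vertices of G_k with s ∈ S such that no two vertices of S are adjacent and every vertex not in S is adjacent to an even number of vertices of S. -/
/-- For every integer `k ≥ 2`, the graph `G_k` has no even kernel
with respect to the starting vertex `s`. -/
theorem Gk_no_even_kernel (k : ℕ) (hk : 2 ≤ k) :
    ¬ ∃ S : Set (GkVert k), EvenKernel (GkGraph k) (gkStart k) S := by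
  rintro ⟨S, -, hsS, hind, heven⟩
  haveI : NeZero (4 * k) := ⟨by omega⟩
  haveI : NeZero (2 * k) := ⟨by omega⟩
  have hadj_sv : ∀ j : ZMod (4 * k), (GkGraph k).Adj (gkStart k) (some (Sum.inr j)) := by
    intro j
    simp [GkGraph, gkStart, SimpleGraph.fromRel_adj, GkRel]
  have hv : ∀ j : ZMod (4 * k), some (Sum.inr j) ∉ S := fun j hj =>
    hind _ hsS _ hj (hadj_sv j)
  have key : ∀ (j : ZMod (4 * k)) (i0 : ZMod (2 * k)),
      (∀ i : ZMod (2 * k), (GkGraph k).Adj (some (Sum.inr j)) (some (Sum.inl i)) → i = i0) →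
      some (Sum.inl i0) ∈ S := by
    intro j i0 huniq
    by_contra h
    have hT : {u | u ∈ S ∧ (GkGraph k).Adj (some (Sum.inr j)) u} = {gkStart k} := by
      ext u
      constructor
      · rintro ⟨huS, hadj⟩
        match u with
        | none => rfl
        | some (Sum.inr j') => exact absurd huS (hv j')
        | some (Sum.inl i) => exact absurd ((huniq i hadj) ▸ huS) h
      · rintro rfl
        exact ⟨hsS, (hadj_sv j).symm⟩
    have he := heven _ (hv j)
    rw [hT] at he
    simp at he
  have hval : ∀ i : ZMod (2 * k), i.val < 2 * k := fun i => i.val_lt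
  have h0 : some (Sum.inl (0 : ZMod (2 * k))) ∈ S := by
    apply key 0
    intro i hadj
    simp only [GkGraph, SimpleGraph.fromRel_adj, GkRel] at hadj
    rcases hadj.2 with h' | h' | h'
    · exact absurd h' (by simp)
    · have hd : (4 * k) ∣ 2 * i.val := by
        rw [← ZMod.natCast_eq_zero_iff]; exact h'.symm
      have : 2 * i.val = 0 := Nat.eq_zero_of_dvd_of_lt hd (by have := hval i; omega)
        |>.symm ▸ rfl
      have hi0 : i.val = 0 := by
        have := Nat.eq_zero_of_dvd_of_lt hd (by have := hval i; omega)
        omega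
      exact (ZMod.val_eq_zero i).mp hi0
    · have hd : (4 * k) ∣ 2 * i.val + 1 := by
        rw [← ZMod.natCast_eq_zero_iff]; exact h'.symm
      have := Nat.eq_zero_of_dvd_of_lt hd (by have := hval i; omega)
      omega
  have h1 : some (Sum.inl (1 : ZMod (2 * k))) ∈ S := by
    apply key 2
    intro i hadj
    simp only [GkGraph, SimpleGraph.fromRel_adj, GkRel] at hadj
    have h2cast : (2 : ZMod (4 * k)) = ((2 : ℕ) : ZMod (4 * k)) := by push_cast; rfl
    rcases hadj.2 with h' | h' | h'
    · exact absurd h' (by simp)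
    · rw [h2cast, ZMod.natCast_eq_natCast_iff'] at h'
      rw [Nat.mod_eq_of_lt (by omega), Nat.mod_eq_of_lt (by have := hval i; omega)] at h'
      have hi1 : i.val = 1 := by omega
      have := ZMod.natCast_zmod_val i
      rw [hi1] at this
      simpa using this.symm
    · rw [h2cast, ZMod.natCast_eq_natCast_iff'] at h'
      rw [Nat.mod_eq_of_lt (by omega), Nat.mod_eq_of_lt (by have := hval i; omega)] at h'
      omega
  refine hind _ h0 _ h1 ?_
  have hne : (0 : ZMod (2 * k)) ≠ 1 := by
    haveI : Fact (1 < 2 * k) := ⟨by omega⟩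
    exact zero_ne_one
  simp [GkGraph, SimpleGraph.fromRel_adj, GkRel, hne]
end

section
/- Let n ≥ 2 be an integer and let B be a nonempty set of vertices of the triangular grid graph T_n such that no two vertices of B are adjacent and every vertex not in B is adjacent to an even number of vertices of B. Then (0,0) ∈ B. -/
/-- The vertex set `{(j,k) : k ≤ j ≤ n}` of the triangular grid graph `T_n`. -/
abbrev TriVert (n : ℕ) : Type := {p : ℕ × ℕ // p.2 ≤ p.1 ∧ p.1 ≤ n}

instance triVertFintype (n : ℕ) : Fintype (TriVert n) :=
  Fintype.subtype ((Finset.range (n+1) ×ˢ Finset.range (n+1)).filter fun p => p.2 ≤ p.1)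
    (by
      intro p
      simp only [Finset.mem_filter, Finset.mem_product, Finset.mem_range, Nat.lt_succ_iff]
      omega)

/-- The triangular grid graph `T_n`: a vertex `(j,k)` (with `k ≤ j ≤ n`) is adjacent
to `(j, k+1)`, `(j+1, k)` and `(j+1, k+1)` whenever these are again vertices. -/
def TriGraph (n : ℕ) : SimpleGraph (TriVert n) :=
  SimpleGraph.fromRel fun p q =>
    (q.1.1 = p.1.1 ∧ q.1.2 = p.1.2 + 1) ∨
    (q.1.1 = p.1.1 + 1 ∧ q.1.2 = p.1.2) ∨
    (q.1.1 = p.1.1 + 1 ∧ q.1.2 = p.1.2 + 1)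

/-- The distinguished starting vertex `(0,0)` of the triangular grid graph. -/
def triStart (n : ℕ) : TriVert n := ⟨(0, 0), Nat.le_refl 0, Nat.zero_le n⟩

lemma tri_adj_iff {n : ℕ} (v u : TriVert n) :
    (TriGraph n).Adj v u ↔ v ≠ u ∧
      (((u.1.1 = v.1.1 ∧ u.1.2 = v.1.2 + 1) ∨ (u.1.1 = v.1.1 + 1 ∧ u.1.2 = v.1.2) ∨
        (u.1.1 = v.1.1 + 1 ∧ u.1.2 = v.1.2 + 1)) ∨
       ((v.1.1 = u.1.1 ∧ v.1.2 = u.1.2 + 1) ∨ (v.1.1 = u.1.1 + 1 ∧ v.1.2 = u.1.2) ∨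
        (v.1.1 = u.1.1 + 1 ∧ v.1.2 = u.1.2 + 1))) := by
  simp [TriGraph, SimpleGraph.fromRel_adj]

lemma tri_ne_of_coords {n : ℕ} {v u : TriVert n} (h : u.1.1 ≠ v.1.1 ∨ u.1.2 ≠ v.1.2) :
    v ≠ u := by
  intro he; subst he; rcases h with h | h <;> exact h rfl

/-- Let `n ≥ 2` and let `B` be a nonempty set of vertices of the
triangular grid graph `T_n` such that no two vertices of `B` are adjacent and every
vertex not in `B` is adjacent to an even number of vertices of `B`.  Then
`(0,0) ∈ B`. -/
theorem even_kernel_contains_origin (n : ℕ) (hn : 2 ≤ n) (B : Set (TriVert n))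
    (hne : B.Nonempty)
    (hind : ∀ u ∈ B, ∀ v ∈ B, ¬ (TriGraph n).Adj u v)
    (heven : ∀ v ∉ B, Even {u | u ∈ B ∧ (TriGraph n).Adj v u}.ncard) :
    triStart n ∈ B := by
  by_contra h0
  have key : ∀ j, ∀ u : TriVert n, u.1.1 = j → u ∉ B := by
    intro j
    induction j using Nat.strong_induction_on with
    | _ j IH =>
      match j with
      | 0 =>
        intro u hu hub
        have hu2 : u.1.2 = 0 := by have := u.2.1; omega
        have : u = triStart n := by
          apply Subtype.ext
          exact Prod.ext hu hu2
        exact h0 (this ▸ hub)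
      | j+1 =>
        intro u hu hub
        have hun : u.1.1 ≤ n := u.2.2
        have hm : u.1.2 ≤ j + 1 := by have := u.2.1; omega
        have hj1n : j + 1 ≤ n := by omega
        set k := min u.1.2 j with hk
        have hkj : k ≤ j := min_le_right _ _
        set v : TriVert n := ⟨(j, k), hkj, by omega⟩ with hvdef
        have hvB : v ∉ B := IH j (Nat.lt_succ_self j) v rfl
        set a : TriVert n := ⟨(j+1, k), by omega, hj1n⟩ with hadef
        set b : TriVert n := ⟨(j+1, k+1), by omega, hj1n⟩ with hbdef
        -- u equals a or b
        have hua : u = a ∨ u = b := by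
          rcases le_or_gt u.1.2 j with h' | h'
          · left
            apply Subtype.ext
            apply Prod.ext
            · exact hu
            · simp only [hadef]; omega
          · right
            apply Subtype.ext
            apply Prod.ext
            · exact hu
            · simp only [hbdef]; omega
        -- a and b are adjacent
        have hab : (TriGraph n).Adj a b := by
          rw [tri_adj_iff]
          refine ⟨tri_ne_of_coords ?_, ?_⟩
          · right; simp [hadef, hbdef]
          · left; left; simp [hadef, hbdef]
        -- v adjacent to a and to b
        have hva : (TriGraph n).Adj v a := by
          rw [tri_adj_iff]
          refine ⟨tri_ne_of_coords ?_, ?_⟩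
          · left; simp [hadef, hvdef]
          · left; right; left; simp [hadef, hvdef]
        have hvb : (TriGraph n).Adj v b := by
          rw [tri_adj_iff]
          refine ⟨tri_ne_of_coords ?_, ?_⟩
          · left; simp [hbdef, hvdef]
          · left; right; right; simp [hbdef, hvdef]
        -- the set of B-neighbours of v is exactly {u}
        have hS : {w | w ∈ B ∧ (TriGraph n).Adj v w} = {u} := by
          ext w
          simp only [Set.mem_setOf_eq, Set.mem_singleton_iff]
          constructor
          · rintro ⟨hwB, hwadj⟩
            rw [tri_adj_iff] at hwadj
            obtain ⟨hne', hc⟩ := hwadj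
            have hv1 : v.1.1 = j := rfl
            have hv2 : v.1.2 = k := rfl
            -- either w is in a row ≤ j (contradiction) or w ∈ {a, b}
            have hcase : w.1.1 ≤ j ∨ (w.1.1 = j + 1 ∧ (w.1.2 = k ∨ w.1.2 = k + 1)) := by
              rcases hc with (⟨h1, h2⟩ | ⟨h1, h2⟩ | ⟨h1, h2⟩) | (⟨h1, h2⟩ | ⟨h1, h2⟩ | ⟨h1, h2⟩) <;>
                omega
            rcases hcase with hle | ⟨hw1, hw2⟩
            · exact absurd hwB (IH w.1.1 (by omega) w rfl)
            · -- w = a or w = b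
              have hwab : w = a ∨ w = b := by
                rcases hw2 with h' | h'
                · left; exact Subtype.ext (Prod.ext hw1 h')
                · right; exact Subtype.ext (Prod.ext hw1 h')
              rcases hua with hua' | hua'
              · rcases hwab with h' | h'
                · rw [h', hua']
                · exact (hind u hub w hwB (by rw [hua', h']; exact hab)).elim
              · rcases hwab with h' | h'
                · exact (hind u hub w hwB (by rw [hua', h']; exact hab.symm)).elim
                · rw [h', hua']
          · rintro rfl
            refine ⟨hub, ?_⟩
            rcases hua with h' | h'
            · rw [h']; exact hva
            · rw [h']; exact hvb
        have := heven v hvB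
        rw [hS, Set.ncard_singleton] at this
        simp at this
  obtain ⟨w, hw⟩ := hne
  exact key w.1.1 w rfl hw
end

section
/- Let n ≥ 2 be an integer and let B be a nonempty set of vertices of the triangular grid graph T_n such that no two vertices of B are adjacent and every vertex not in B is adjacent to an even number of vertices of B. Then B contains all three corner vertices (0,0), (n,0) and (n,n). -/
/-- Coordinate characterization of adjacency in `TriGraph n`. -/
lemma triAdj_iff {n : ℕ} {p q : TriVert n} :
    (TriGraph n).Adj p q ↔ ¬(p.1.1 = q.1.1 ∧ p.1.2 = q.1.2) ∧
      (((q.1.1 = p.1.1 ∧ q.1.2 = p.1.2 + 1) ∨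
        (q.1.1 = p.1.1 + 1 ∧ q.1.2 = p.1.2) ∨
        (q.1.1 = p.1.1 + 1 ∧ q.1.2 = p.1.2 + 1)) ∨
       ((p.1.1 = q.1.1 ∧ p.1.2 = q.1.2 + 1) ∨
        (p.1.1 = q.1.1 + 1 ∧ p.1.2 = q.1.2) ∨
        (p.1.1 = q.1.1 + 1 ∧ p.1.2 = q.1.2 + 1))) := by
  rw [TriGraph, SimpleGraph.fromRel_adj]
  constructor
  · rintro ⟨h1, h2⟩
    exact ⟨fun h => h1 (Subtype.ext (Prod.ext h.1 h.2)), h2⟩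
  · rintro ⟨h1, h2⟩
    exact ⟨fun h => h1 (by rw [h]; exact ⟨rfl, rfl⟩), h2⟩

/-- The cascade: if `(0,0) ∉ B`, then `B` is empty. -/
lemma triCascade (n : ℕ) (B : Set (TriVert n))
    (hind : ∀ u ∈ B, ∀ v ∈ B, ¬ (TriGraph n).Adj u v)
    (heven : ∀ v ∉ B, Even {u | u ∈ B ∧ (TriGraph n).Adj v u}.ncard)
    (h0 : triStart n ∉ B) : ∀ v : TriVert n, v ∉ B := by
  have H : ∀ j, ∀ v : TriVert n, v.1.1 ≤ j → v ∉ B := by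
    intro j
    induction j with
    | zero =>
      intro v hv
      have : v = triStart n := by
        apply Subtype.ext
        obtain ⟨⟨a, b⟩, hab⟩ := v
        simp only at hv hab ⊢
        have ha : a = 0 := Nat.le_antisymm hv (Nat.zero_le _)
        have hb : b = 0 := by omega
        simp_all [triStart]
      rw [this]; exact h0
    | succ j ih =>
      intro w hw
      by_cases hle : w.1.1 ≤ j
      · exact ih w hle
      have hw1 : w.1.1 = j + 1 := by omega
      have hjn : j + 1 ≤ n := hw1 ▸ w.2.2
      set k := min w.1.2 j with hk
      have hkj : k ≤ j := min_le_right _ _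
      let v : TriVert n := ⟨(j, k), hkj, by omega⟩
      let a : TriVert n := ⟨(j + 1, k), by omega, hjn⟩
      let b : TriVert n := ⟨(j + 1, k + 1), by omega, hjn⟩
      have hv1 : (v : TriVert n).1.1 = j := rfl
      have hv2 : (v : TriVert n).1.2 = k := rfl
      have ha1 : (a : TriVert n).1.1 = j + 1 := rfl
      have ha2 : (a : TriVert n).1.2 = k := rfl
      have hb1 : (b : TriVert n).1.1 = j + 1 := rfl
      have hb2 : (b : TriVert n).1.2 = k + 1 := rfl
      have hvB : v ∉ B := ih v (le_refl j)
      have hS := heven v hvB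
      set S := {u | u ∈ B ∧ (TriGraph n).Adj v u} with hSdef
      have hsub : S ⊆ {a, b} := by
        rintro u ⟨huB, hadj⟩
        rw [triAdj_iff] at hadj
        by_cases hu : u.1.1 ≤ j
        · exact absurd huB (ih u hu)
        · have h1 : u.1.1 = j + 1 := by omega
          have h2 : u.1.2 = k ∨ u.1.2 = k + 1 := by omega
          rcases h2 with h2 | h2
          · left; exact Subtype.ext (Prod.ext h1 h2)
          · right; exact Subtype.ext (Prod.ext h1 h2)
      have hab : (TriGraph n).Adj a b := by
        rw [triAdj_iff]
        constructor
        · rintro ⟨-, h⟩; simp [a, b] at h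
        · left; left; exact ⟨rfl, rfl⟩
      have hss : S.Subsingleton := by
        intro x hx y hy
        by_contra hxy
        have hxab := hsub hx
        have hyab := hsub hy
        simp only [Set.mem_insert_iff, Set.mem_singleton_iff] at hxab hyab
        rcases hxab with hx' | hx' <;> rcases hyab with hy' | hy'
        · exact hxy (hx'.trans hy'.symm)
        · exact hind x hx.1 y hy.1 (hx' ▸ hy' ▸ hab)
        · exact hind y hy.1 x hx.1 (hy' ▸ hx' ▸ hab)
        · exact hxy (hx'.trans hy'.symm)
      have hSempty : S = ∅ := by
        rcases hss.eq_empty_or_singleton with h | ⟨x, h⟩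
        · exact h
        · rw [h, Set.ncard_singleton] at hS
          exact absurd hS (by decide)
      intro hwB
      have hadj : (TriGraph n).Adj v w := by
        rw [triAdj_iff]
        have hwk : w.1.2 = k ∨ w.1.2 = k + 1 := by
          rcases le_or_gt w.1.2 j with h | h
          · left; omega
          · right; have := w.2.1; omega
        constructor
        · rintro ⟨h1, -⟩; simp only [hw1] at h1; omega
        · left
          rcases hwk with h | h
          · right; left; exact ⟨by omega, by omega⟩
          · right; right; exact ⟨by omega, by omega⟩
      have : w ∈ S := ⟨hwB, hadj⟩
      rw [hSempty] at this
      exact this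
  intro v
  exact H v.1.1 v (le_refl _)

/-- Rotation of the triangle: `(j,k) ↦ (n-k, j-k)`. -/
def triRot (n : ℕ) : TriVert n ≃ TriVert n where
  toFun p := ⟨(n - p.1.2, p.1.1 - p.1.2), by have := p.2; omega⟩
  invFun p := ⟨(p.1.2 + n - p.1.1, n - p.1.1), by have := p.2; omega⟩
  left_inv p := by
    apply Subtype.ext
    have := p.2
    apply Prod.ext <;> simp <;> omega
  right_inv p := by
    apply Subtype.ext
    have := p.2
    apply Prod.ext <;> simp <;> omega

lemma triRot_coord {n : ℕ} (p : TriVert n) :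
    ((triRot n p) : TriVert n).1.1 = n - p.1.2 ∧
    ((triRot n p) : TriVert n).1.2 = p.1.1 - p.1.2 := ⟨rfl, rfl⟩

/-- Arithmetic core of the fact that `triRot` is a graph automorphism. -/
lemma triRot_arith (n pj pk qj qk : ℕ) (hp1 : pk ≤ pj) (hp2 : pj ≤ n)
    (hq1 : qk ≤ qj) (hq2 : qj ≤ n) :
    (¬(n - pk = n - qk ∧ pj - pk = qj - qk) ∧
      (((n - qk = n - pk ∧ qj - qk = pj - pk + 1) ∨
        (n - qk = n - pk + 1 ∧ qj - qk = pj - pk) ∨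
        (n - qk = n - pk + 1 ∧ qj - qk = pj - pk + 1)) ∨
       ((n - pk = n - qk ∧ pj - pk = qj - qk + 1) ∨
        (n - pk = n - qk + 1 ∧ pj - pk = qj - qk) ∨
        (n - pk = n - qk + 1 ∧ pj - pk = qj - qk + 1)))) ↔
    (¬(pj = qj ∧ pk = qk) ∧
      (((qj = pj ∧ qk = pk + 1) ∨ (qj = pj + 1 ∧ qk = pk) ∨ (qj = pj + 1 ∧ qk = pk + 1)) ∨
       ((pj = qj ∧ pk = qk + 1) ∨ (pj = qj + 1 ∧ pk = qk) ∨ (pj = qj + 1 ∧ pk = qk + 1)))) := by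
  constructor
  · rintro ⟨h1, h2⟩
    refine ⟨by omega, ?_⟩
    rcases h2 with (⟨e1, e2⟩ | ⟨e1, e2⟩ | ⟨e1, e2⟩) | (⟨e1, e2⟩ | ⟨e1, e2⟩ | ⟨e1, e2⟩)
    · exact Or.inl (Or.inr (Or.inl ⟨by omega, by omega⟩))
    · exact Or.inr (Or.inr (Or.inr ⟨by omega, by omega⟩))
    · exact Or.inr (Or.inl ⟨by omega, by omega⟩)
    · exact Or.inr (Or.inr (Or.inl ⟨by omega, by omega⟩))
    · exact Or.inl (Or.inr (Or.inr ⟨by omega, by omega⟩))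
    · exact Or.inl (Or.inl ⟨by omega, by omega⟩)
  · rintro ⟨h1, h2⟩
    refine ⟨by omega, ?_⟩
    rcases h2 with (⟨e1, e2⟩ | ⟨e1, e2⟩ | ⟨e1, e2⟩) | (⟨e1, e2⟩ | ⟨e1, e2⟩ | ⟨e1, e2⟩)
    · exact Or.inr (Or.inr (Or.inr ⟨by omega, by omega⟩))
    · exact Or.inl (Or.inl ⟨by omega, by omega⟩)
    · exact Or.inr (Or.inr (Or.inl ⟨by omega, by omega⟩))
    · exact Or.inl (Or.inr (Or.inr ⟨by omega, by omega⟩))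
    · exact Or.inr (Or.inl ⟨by omega, by omega⟩)
    · exact Or.inl (Or.inr (Or.inl ⟨by omega, by omega⟩))

/-- `triRot` is a graph automorphism. -/
lemma triRot_adj {n : ℕ} (p q : TriVert n) :
    (TriGraph n).Adj (triRot n p) (triRot n q) ↔ (TriGraph n).Adj p q := by
  obtain ⟨a1, a2⟩ := triRot_coord p
  obtain ⟨b1, b2⟩ := triRot_coord q
  rw [triAdj_iff (p := triRot n p), triAdj_iff (p := p), a1, a2, b1, b2]
  exact triRot_arith n p.1.1 p.1.2 q.1.1 q.1.2 p.2.1 p.2.2 q.2.1 q.2.2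

/-- Transfer the hypotheses along an adjacency-preserving equivalence. -/
lemma triTransfer {n : ℕ} (e : TriVert n ≃ TriVert n)
    (he : ∀ p q, (TriGraph n).Adj (e p) (e q) ↔ (TriGraph n).Adj p q)
    (B : Set (TriVert n))
    (hind : ∀ u ∈ B, ∀ v ∈ B, ¬ (TriGraph n).Adj u v)
    (heven : ∀ v ∉ B, Even {u | u ∈ B ∧ (TriGraph n).Adj v u}.ncard) :
    (∀ u ∈ (e ⁻¹' B), ∀ v ∈ (e ⁻¹' B), ¬ (TriGraph n).Adj u v) ∧
    (∀ v ∉ (e ⁻¹' B), Even {u | u ∈ (e ⁻¹' B) ∧ (TriGraph n).Adj v u}.ncard) := by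
  constructor
  · intro u hu v hv hadj
    exact hind (e u) hu (e v) hv ((he u v).mpr hadj)
  · intro v hv
    have himg : (e '' {u | u ∈ (e ⁻¹' B) ∧ (TriGraph n).Adj v u}) =
        {u | u ∈ B ∧ (TriGraph n).Adj (e v) u} := by
      ext y
      constructor
      · rintro ⟨x, ⟨hxB, hxadj⟩, rfl⟩
        exact ⟨hxB, (he v x).mpr hxadj⟩
      · rintro ⟨hyB, hyadj⟩
        refine ⟨e.symm y, ⟨?_, ?_⟩, e.apply_symm_apply y⟩
        · simpa [e.apply_symm_apply] using hyB
        · have := (he v (e.symm y)).symm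
          rw [e.apply_symm_apply] at this
          exact this.mpr hyadj
    have hcard : {u | u ∈ (e ⁻¹' B) ∧ (TriGraph n).Adj v u}.ncard =
        {u | u ∈ B ∧ (TriGraph n).Adj (e v) u}.ncard := by
      rw [← himg]
      exact (Set.ncard_image_of_injective _ e.injective).symm
    rw [hcard]
    exact heven (e v) hv

/-- Under the hypotheses, `(0,0) ∈ B`. -/
lemma triCorner0 {n : ℕ} (B : Set (TriVert n)) (hne : B.Nonempty)
    (hind : ∀ u ∈ B, ∀ v ∈ B, ¬ (TriGraph n).Adj u v)
    (heven : ∀ v ∉ B, Even {u | u ∈ B ∧ (TriGraph n).Adj v u}.ncard) :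
    triStart n ∈ B := by
  by_contra h0
  obtain ⟨v, hv⟩ := hne
  exact triCascade n B hind heven h0 v hv

/-- Let `n ≥ 2` and let `B` be a nonempty set of vertices of the
triangular grid graph `T_n` such that no two vertices of `B` are adjacent and every
vertex not in `B` is adjacent to an even number of vertices of `B`.  Then `B`
contains all three corner vertices `(0,0)`, `(n,0)` and `(n,n)`. -/
theorem even_kernel_contains_corners (n : ℕ) (hn : 2 ≤ n) (B : Set (TriVert n))
    (hne : B.Nonempty)
    (hind : ∀ u ∈ B, ∀ v ∈ B, ¬ (TriGraph n).Adj u v)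
    (heven : ∀ v ∉ B, Even {u | u ∈ B ∧ (TriGraph n).Adj v u}.ncard) :
    triStart n ∈ B ∧
      (⟨(n, 0), Nat.zero_le n, Nat.le_refl n⟩ : TriVert n) ∈ B ∧
      (⟨(n, n), Nat.le_refl n, Nat.le_refl n⟩ : TriVert n) ∈ B := by
  -- transfer once
  set e := triRot n with he
  have h1 := triTransfer e (fun p q => triRot_adj p q) B hind heven
  have hne1 : (e ⁻¹' B).Nonempty := by
    obtain ⟨v, hv⟩ := hne
    exact ⟨e.symm v, by simp [Set.mem_preimage, e.apply_symm_apply, hv]⟩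
  have h2 := triTransfer e (fun p q => triRot_adj p q) (e ⁻¹' B) h1.1 h1.2
  have hne2 : (e ⁻¹' (e ⁻¹' B)).Nonempty := by
    obtain ⟨v, hv⟩ := hne1
    exact ⟨e.symm v, by simp [Set.mem_preimage, e.apply_symm_apply, hv]⟩
  have c0 : triStart n ∈ B := triCorner0 B hne hind heven
  have c1 : triStart n ∈ (e ⁻¹' B) := triCorner0 _ hne1 h1.1 h1.2
  have c2 : triStart n ∈ (e ⁻¹' (e ⁻¹' B)) := triCorner0 _ hne2 h2.1 h2.2
  have hrot0 : e (triStart n) = ⟨(n, 0), Nat.zero_le n, Nat.le_refl n⟩ := by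
    apply Subtype.ext
    obtain ⟨r1, r2⟩ := triRot_coord (triStart n)
    apply Prod.ext
    · rw [r1]; rfl
    · rw [r2]; rfl
  have hrot1 : e (e (triStart n)) = ⟨(n, n), Nat.le_refl n, Nat.le_refl n⟩ := by
    rw [hrot0]
    apply Subtype.ext
    obtain ⟨r1, r2⟩ := triRot_coord (⟨(n, 0), Nat.zero_le n, Nat.le_refl n⟩ : TriVert n)
    apply Prod.ext
    · rw [r1]; simp
    · rw [r2]; simp
  refine ⟨c0, ?_, ?_⟩
  · rw [← hrot0]; exact c1
  · rw [← hrot1]; exact c2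
end

section
/- Let n ≥ 2 be an even integer. Then the set B = {(j,k) : k ≤ j ≤ n, j ≡ 0 (mod 2) and k ≡ 0 (mod 2)} is an even kernel of the triangular grid graph T_n with respect to the vertex (0,0): B contains (0,0), no two vertices of B are adjacent in T_n, and every vertex of T_n not in B is adjacent to an even number of vertices of B. -/
lemma triGraph_adj (n : ℕ) (p q : TriVert n) :
    (TriGraph n).Adj p q ↔ p ≠ q ∧
      (((q.1.1 = p.1.1 ∧ q.1.2 = p.1.2 + 1) ∨
        (q.1.1 = p.1.1 + 1 ∧ q.1.2 = p.1.2) ∨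
        (q.1.1 = p.1.1 + 1 ∧ q.1.2 = p.1.2 + 1)) ∨
       ((p.1.1 = q.1.1 ∧ p.1.2 = q.1.2 + 1) ∨
        (p.1.1 = q.1.1 + 1 ∧ p.1.2 = q.1.2) ∨
        (p.1.1 = q.1.1 + 1 ∧ p.1.2 = q.1.2 + 1))) := by
  rw [TriGraph, SimpleGraph.fromRel_adj]

/-- For every even integer `n ≥ 2`, the set of vertices `(j,k)`
of `T_n` with both coordinates even is an even kernel of the triangular grid graph
`T_n` with respect to the vertex `(0,0)`. -/
theorem even_coordinates_even_kernel (n : ℕ) (hn : 2 ≤ n) (hpar : Even n) :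
    EvenKernel (TriGraph n) (triStart n)
      {p : TriVert n | Even p.1.1 ∧ Even p.1.2} := by
  have hstart : (triStart n) ∈ {p : TriVert n | Even p.1.1 ∧ Even p.1.2} := by
    simp [triStart]
  refine ⟨⟨_, hstart⟩, hstart, ?_, ?_⟩
  · rintro ⟨⟨a, b⟩, hba, han⟩ ⟨hea, heb⟩ ⟨⟨c, d⟩, hdc, hcn⟩ ⟨hec, hed⟩ hadj
    rw [triGraph_adj] at hadj
    rw [Nat.even_iff] at hea heb hec hed
    obtain ⟨-, h⟩ := hadj
    dsimp only at h hea heb hec hed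
    omega
  · rintro ⟨⟨a, b⟩, hba, han⟩ hv
    simp only [Set.mem_setOf_eq, Nat.even_iff, not_and] at hv
    rw [Nat.even_iff] at hpar
    dsimp only at hv hba han
    rcases Nat.even_or_odd a with ha | ha <;> rcases Nat.even_or_odd b with hb | hb <;>
      simp only [Nat.even_iff, Nat.odd_iff] at ha hb
    · exact absurd hb (hv ha)
    · -- a even, b odd : neighbors (a, b-1) and (a, b+1)
      have hset : {u | u ∈ {p : TriVert n | Even p.1.1 ∧ Even p.1.2} ∧
          (TriGraph n).Adj ⟨(a, b), hba, han⟩ u} =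
          {⟨(a, b - 1), by omega, han⟩, ⟨(a, b + 1), by omega, han⟩} := by
        ext ⟨⟨c, d⟩, hdc, hcn⟩
        simp only [Set.mem_setOf_eq, Set.mem_insert_iff, Set.mem_singleton_iff,
          triGraph_adj, ne_eq, Subtype.mk.injEq, Prod.mk.injEq, Nat.even_iff]
        dsimp only at hdc hcn ⊢
        omega
      rw [hset, Set.ncard_pair (by
        intro h
        rw [Subtype.mk.injEq, Prod.mk.injEq] at h
        omega)]
      exact even_two
    · -- a odd, b even : neighbors (a-1, b) and (a+1, b)
      have hset : {u | u ∈ {p : TriVert n | Even p.1.1 ∧ Even p.1.2} ∧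
          (TriGraph n).Adj ⟨(a, b), hba, han⟩ u} =
          {⟨(a - 1, b), by omega, by omega⟩, ⟨(a + 1, b), by omega, by omega⟩} := by
        ext ⟨⟨c, d⟩, hdc, hcn⟩
        simp only [Set.mem_setOf_eq, Set.mem_insert_iff, Set.mem_singleton_iff,
          triGraph_adj, ne_eq, Subtype.mk.injEq, Prod.mk.injEq, Nat.even_iff]
        dsimp only at hdc hcn ⊢
        omega
      rw [hset, Set.ncard_pair (by
        intro h
        rw [Subtype.mk.injEq, Prod.mk.injEq] at h
        omega)]
      exact even_two
    · -- a odd, b odd : neighbors (a-1, b-1) and (a+1, b+1)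
      have hset : {u | u ∈ {p : TriVert n | Even p.1.1 ∧ Even p.1.2} ∧
          (TriGraph n).Adj ⟨(a, b), hba, han⟩ u} =
          {⟨(a - 1, b - 1), by omega, by omega⟩, ⟨(a + 1, b + 1), by omega, by omega⟩} := by
        ext ⟨⟨c, d⟩, hdc, hcn⟩
        simp only [Set.mem_setOf_eq, Set.mem_insert_iff, Set.mem_singleton_iff,
          triGraph_adj, ne_eq, Subtype.mk.injEq, Prod.mk.injEq, Nat.even_iff]
        dsimp only at hdc hcn ⊢
        omega
      rw [hset, Set.ncard_pair (by
        intro h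
        rw [Subtype.mk.injEq, Prod.mk.injEq] at h
        omega)]
      exact even_two
end

section
/- Let m, n ≥ 3 be integers and let c > 1 be a common divisor of m and n. Then the set S = {(a,b) ∈ (ZMod m) × (ZMod n) : the images of a and b under the natural reduction maps ZMod m → ZMod c and ZMod n → ZMod c are equal} is an even kernel of the toroidal grid graph Q(m,n) with respect to the vertex (0,0): S contains (0,0), no two vertices of S are adjacent in Q(m,n), and every vertex of Q(m,n) not in S is adjacent to an even number of vertices of S. -/
lemma zmod_one_ne_zero {m : ℕ} (hm : 3 ≤ m) : (1 : ZMod m) ≠ 0 := by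
  haveI : Fact (1 < m) := ⟨by omega⟩
  exact one_ne_zero

lemma zmod_two_ne_zero {m : ℕ} (hm : 3 ≤ m) : (2 : ZMod m) ≠ 0 := by
  haveI : NeZero m := ⟨by omega⟩
  have : ((2 : ℕ) : ZMod m) ≠ 0 := by
    rw [Ne, ZMod.natCast_eq_zero_iff]
    intro h; have := Nat.le_of_dvd (by norm_num) h; omega
  simpa using this

lemma torAdj {m n : ℕ} (hm : 3 ≤ m) (hn : 3 ≤ n) (v u : ZMod m × ZMod n) :
    (TorGraph m n).Adj v u ↔
      u = (v.1 + 1, v.2) ∨ u = (v.1 - 1, v.2) ∨ u = (v.1, v.2 + 1) ∨ u = (v.1, v.2 - 1) := by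
  have h1m := zmod_one_ne_zero hm
  have h1n := zmod_one_ne_zero hn
  rw [TorGraph, SimpleGraph.fromRel_adj]
  constructor
  · rintro ⟨hne, (⟨h1, h2⟩ | ⟨h1, h2⟩) | (⟨h1, h2⟩ | ⟨h1, h2⟩)⟩
    · exact Or.inr (Or.inr (Or.inl (Prod.ext h1.symm h2)))
    · exact Or.inl (Prod.ext h2 h1.symm)
    · exact Or.inr (Or.inr (Or.inr (Prod.ext h1 (eq_sub_of_add_eq h2.symm))))
    · exact Or.inr (Or.inl (Prod.ext (eq_sub_of_add_eq h2.symm) h1))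
  · rintro (rfl | rfl | rfl | rfl)
    · exact ⟨by simp [Prod.ext_iff, h1m], Or.inl (Or.inr ⟨rfl, rfl⟩)⟩
    · refine ⟨by simp [Prod.ext_iff, eq_sub_iff_add_eq, h1m], Or.inr (Or.inr ⟨rfl, by simp⟩)⟩
    · exact ⟨by simp [Prod.ext_iff, h1n], Or.inl (Or.inl ⟨rfl, rfl⟩)⟩
    · refine ⟨by simp [Prod.ext_iff, eq_sub_iff_add_eq, h1n], Or.inr (Or.inl ⟨rfl, by simp⟩)⟩

/-- Let `m, n ≥ 3` and let `c > 1` be a common divisor of `m` and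
`n`.  Then the set of vertices `(a,b)` of `Q(m,n)` whose coordinates have equal
images under the reduction maps `ZMod m → ZMod c` and `ZMod n → ZMod c` is an even
kernel of `Q(m,n)` with respect to the vertex `(0,0)`. -/
theorem toroidal_diagonal_even_kernel (m n c : ℕ) (hm : 3 ≤ m) (hn : 3 ≤ n)
    (hc : 1 < c) (hcm : c ∣ m) (hcn : c ∣ n) :
    EvenKernel (TorGraph m n) (0, 0)
      {p : ZMod m × ZMod n |
        ZMod.castHom hcm (ZMod c) p.1 = ZMod.castHom hcn (ZMod c) p.2} := by
  haveI : Fact (1 < c) := ⟨hc⟩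
  set f := ZMod.castHom hcm (ZMod c) with hf
  set g := ZMod.castHom hcn (ZMod c) with hg
  have h1m := zmod_one_ne_zero hm
  have h1n := zmod_one_ne_zero hn
  have h2m := zmod_two_ne_zero hm
  have h2n := zmod_two_ne_zero hn
  refine ⟨⟨(0, 0), by simp⟩, by simp, ?_, ?_⟩
  · rintro u hu v hv hadj
    rw [torAdj hm hn] at hadj
    simp only [Set.mem_setOf_eq] at hu hv
    rcases hadj with rfl | rfl | rfl | rfl <;>
      simp only [map_add, map_sub, map_one, hu] at hv <;>
      exact (one_ne_zero : (1 : ZMod c) ≠ 0)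
        (by first | linear_combination hv | linear_combination -hv)
  · rintro ⟨a, b⟩ hv
    simp only [Set.mem_setOf_eq] at hv ⊢
    by_cases hP : f a + 1 = g b <;> by_cases hQ : f a = g b + 1
    · -- all four neighbors
      have hset : {u | (f u.1 = g u.2) ∧ (TorGraph m n).Adj (a, b) u} =
          insert (a + 1, b) (insert (a - 1, b) {(a, b + 1), (a, b - 1)}) := by
        ext u
        simp only [Set.mem_setOf_eq, torAdj hm hn, Set.mem_insert_iff, Set.mem_singleton_iff]
        constructor
        · rintro ⟨_, h⟩; exact h
        · rintro (rfl | rfl | rfl | rfl)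
          · exact ⟨by simp only [map_add, map_one]; exact hP, by tauto⟩
          · exact ⟨by simp only [map_sub, map_one]; linear_combination hQ, by tauto⟩
          · exact ⟨by simp only [map_add, map_one]; linear_combination hQ, by tauto⟩
          · exact ⟨by simp only [map_sub, map_one]; linear_combination hP, by tauto⟩
      rw [hset]
      rw [Set.ncard_insert_of_notMem (by
            simp only [Set.mem_insert_iff, Set.mem_singleton_iff, Prod.mk.injEq, not_or]
            refine ⟨?_, ?_, ?_⟩ <;> rintro ⟨h1, h2⟩
            · exact h2m (by linear_combination h1)
            · exact h1m (by linear_combination h1)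
            · exact h1m (by linear_combination h1)) (by toFinite_tac),
          Set.ncard_insert_of_notMem (by
            simp only [Set.mem_insert_iff, Set.mem_singleton_iff, Prod.mk.injEq, not_or]
            constructor <;> rintro ⟨h1, h2⟩ <;> exact h1m (by linear_combination -h1)) (by toFinite_tac),
          Set.ncard_pair (by
            rintro h; rw [Prod.mk.injEq] at h
            exact h2n (by linear_combination h.2))]
      decide
    · -- only (a+1,b) and (a,b-1)
      have hset : {u | (f u.1 = g u.2) ∧ (TorGraph m n).Adj (a, b) u} =
          {(a + 1, b), (a, b - 1)} := by
        ext u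
        simp only [Set.mem_setOf_eq, torAdj hm hn, Set.mem_insert_iff, Set.mem_singleton_iff]
        constructor
        · rintro ⟨hmem, rfl | rfl | rfl | rfl⟩ <;>
            simp only [map_add, map_sub, map_one] at hmem
          · exact Or.inl rfl
          · exact absurd (by linear_combination hmem) hQ
          · exact absurd (by linear_combination hmem) hQ
          · exact Or.inr rfl
        · rintro (rfl | rfl) <;> simp only [map_add, map_sub, map_one] <;>
            exact ⟨by linear_combination hP, by tauto⟩
      rw [hset, Set.ncard_pair (by
        rintro h; rw [Prod.mk.injEq] at h
        exact h1m (by linear_combination h.1))]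
      norm_num
    · -- only (a-1,b) and (a,b+1)
      have hset : {u | (f u.1 = g u.2) ∧ (TorGraph m n).Adj (a, b) u} =
          {(a - 1, b), (a, b + 1)} := by
        ext u
        simp only [Set.mem_setOf_eq, torAdj hm hn, Set.mem_insert_iff, Set.mem_singleton_iff]
        constructor
        · rintro ⟨hmem, rfl | rfl | rfl | rfl⟩ <;>
            simp only [map_add, map_sub, map_one] at hmem
          · exact absurd (by linear_combination hmem) hP
          · exact Or.inl rfl
          · exact Or.inr rfl
          · exact absurd (by linear_combination hmem) hP
        · rintro (rfl | rfl) <;> simp only [map_add, map_sub, map_one] <;>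
            exact ⟨by linear_combination hQ, by tauto⟩
      rw [hset, Set.ncard_pair (by
        rintro h; rw [Prod.mk.injEq] at h
        exact h1m (by linear_combination -h.1))]
      norm_num
    · -- no neighbors in S
      have hset : {u | (f u.1 = g u.2) ∧ (TorGraph m n).Adj (a, b) u} = (∅ : Set _) := by
        ext u
        simp only [Set.mem_setOf_eq, Set.mem_empty_iff_false, iff_false, not_and]
        intro hmem hadj
        rw [torAdj hm hn] at hadj
        rcases hadj with rfl | rfl | rfl | rfl <;>
          simp only [map_add, map_sub, map_one] at hmem
        · exact hP (by linear_combination hmem)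
        · exact hQ (by linear_combination hmem)
        · exact hQ (by linear_combination hmem)
        · exact hP (by linear_combination hmem)
      rw [hset]
      simp
end
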